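/- arXiv:1802.00467 — 7 statements merged into one kernel-verified Lean document; each statement's English description precedes it below -/
import Mathlib

section
/- Let σ be a permutation of {1,…,δ} for which there is some metrically homogeneous graph Γ of diameter δ twistable by σ, and let k = σ⁻¹(1). Then σ(ik) = i for all positive integers i satisfying ik ≤ δ. -/
open SimpleGraph

section Defs

variable {V : Type*}

/-- A graph is *metrically homogeneous* if it is connected and every
distance-preserving map defined on a finite set of vertices extends to a
distance-preserving bijection of the whole vertex set (with respect to the
path metric). -/
def IsMetricallyHomogeneous (G : SimpleGraph V) : Prop :=
  G.Connected ∧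
  ∀ (s : Finset V) (f : V → V),
    (∀ x ∈ s, ∀ y ∈ s, G.dist (f x) (f y) = G.dist x y) →
    ∃ g : V ≃ V, (∀ x y : V, G.dist (g x) (g y) = G.dist x y) ∧ ∀ x ∈ s, g x = f x

/-- `δ` is the diameter of `G` (with respect to the path metric). -/
def HasDiameter (G : SimpleGraph V) (δ : ℕ) : Prop :=
  (∀ x y : V, G.dist x y ≤ δ) ∧ ∃ x y : V, G.dist x y = δ

/-- The set of (nonzero) distances realized in `G`. -/
def DistSet (G : SimpleGraph V) : Set ℕ :=
  {n : ℕ | 0 < n ∧ ∃ x y : V, G.dist x y = n}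

/-- `G` is of *generic type*: any two vertices at distance `2` have infinitely
many common neighbors forming an independent set, and the set of neighbors of
any fixed vertex (with the induced metric) carries no non-trivial equivalence
relation invariant under all of its self-isometries. -/
def GenericType (G : SimpleGraph V) : Prop :=
  (∀ x y : V, G.dist x y = 2 →
    {z : V | G.Adj x z ∧ G.Adj y z}.Infinite ∧
    ∀ z w : V, (G.Adj x z ∧ G.Adj y z) → (G.Adj x w ∧ G.Adj y w) → ¬ G.Adj z w) ∧
  ∀ v : V, ∀ r : G.neighborSet v → G.neighborSet v → Prop,
    Equivalence r →
    (∀ g : G.neighborSet v ≃ G.neighborSet v,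
      (∀ x y : G.neighborSet v, G.dist (g x : V) (g y : V) = G.dist (x : V) (y : V)) →
      ∀ x y : G.neighborSet v, r x y → r (g x) (g y)) →
    (∀ x y, r x y) ∨ (∀ x y, r x y → x = y)

/-- A triangle of type `(a,b,c)` is realized in `G`. -/
def RealizesTriangle (G : SimpleGraph V) (a b c : ℕ) : Prop :=
  ∃ x y z : V, G.dist x y = a ∧ G.dist y z = b ∧ G.dist x z = c

/-- `G` contains a triangle (three distinct vertices) of perimeter `p`. -/
def RealizesPerimeter (G : SimpleGraph V) (p : ℕ) : Prop :=
  ∃ x y z : V, x ≠ y ∧ y ≠ z ∧ x ≠ z ∧ G.dist x y + G.dist y z + G.dist x z = p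

/-- `k` is the parameter `K₁` of `G`: the least `m` such that a triangle of
type `(m,m,1)` is realized in `G`. -/
def IsK1 (G : SimpleGraph V) (k : ℕ) : Prop :=
  IsLeast {m : ℕ | RealizesTriangle G m m 1} k

/-- `k` is the parameter `K₂` of `G`: the greatest `m` such that a triangle of
type `(m,m,1)` is realized in `G`. -/
def IsK2 (G : SimpleGraph V) (k : ℕ) : Prop :=
  IsGreatest {m : ℕ | RealizesTriangle G m m 1} k

/-- `c` is the parameter `C₀` of `G` (relative to the diameter `δ`): the least
even number greater than `2δ` such that no triangle of perimeter `c` occurs. -/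
def IsC0 (G : SimpleGraph V) (δ c : ℕ) : Prop :=
  IsLeast {c' : ℕ | Even c' ∧ 2 * δ < c' ∧ ¬ RealizesPerimeter G c'} c

/-- `c` is the parameter `C₁` of `G` (relative to the diameter `δ`): the least
odd number greater than `2δ` such that no triangle of perimeter `c` occurs. -/
def IsC1 (G : SimpleGraph V) (δ c : ℕ) : Prop :=
  IsLeast {c' : ℕ | Odd c' ∧ 2 * δ < c' ∧ ¬ RealizesPerimeter G c'} c

/-- `G` (of diameter `δ`) is antipodal: every vertex has a unique vertex at
distance `δ` from it. -/
def IsAntipodal (G : SimpleGraph V) (δ : ℕ) : Prop :=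
  ∀ v : V, ∃! w : V, G.dist v w = δ

/-- `G` is bipartite. -/
def IsBipartiteGraph (G : SimpleGraph V) : Prop :=
  ∃ f : V → Bool, ∀ x y : V, G.Adj x y → f x ≠ f y

/-- `G` is complete multipartite: there is an equivalence relation such that
two vertices are adjacent exactly when they are inequivalent. -/
def IsCompleteMultipartiteGraph (G : SimpleGraph V) : Prop :=
  ∃ r : V → V → Prop, Equivalence r ∧ ∀ x y : V, G.Adj x y ↔ ¬ r x y

/-- `G` is an `n`-cycle. -/
def IsNCycle (G : SimpleGraph V) (n : ℕ) : Prop :=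
  ∃ e : V ≃ ZMod n, ∀ x y : V, G.Adj x y ↔ (e x - e y = 1 ∨ e y - e x = 1)

/-- The permutation `ρ` of `{1,…,δ}`. -/
def rhoFun (δ i : ℕ) : ℕ := if 2 * i ≤ δ then 2 * i else 2 * (δ - i) + 1

/-- The permutation `ρ⁻¹` of `{1,…,δ}`. -/
def rhoInvFun (δ i : ℕ) : ℕ := if Even i then i / 2 else δ - (i - 1) / 2

/-- The involution `τ_ε` of `{1,…,δ}`, for `ε = 0` or `1`. -/
def tauFun (δ ε i : ℕ) : ℕ := if Odd (min i (δ + ε - i)) then δ + ε - i else i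

/-- The `n`-cycle graph on `ZMod n`. -/
def zmodCycleGraph (n : ℕ) : SimpleGraph (ZMod n) where
  Adj x y := x ≠ y ∧ (x - y = 1 ∨ y - x = 1)
  symm := ⟨fun x y h => ⟨h.1.symm, h.2.symm⟩⟩
  loopless := ⟨fun x h => h.1 rfl⟩

end Defs

/-!
Write `k = σ⁻¹(1)`. Two vertices are adjacent in the twisted graph `H` exactly when they are at
`G`-distance `k`, so `H` is the distance-`k` graph of `G`. An `H`-walk of length `m` moves at most
`mk` in `G`, and cutting a `G`-geodesic of length `ik` every `k` steps gives an `H`-walk of length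
`i`; hence `H`-distance `i` is the same as `G`-distance `ik`, i.e. `σ(ik) = i`. That `k ≠ 0` comes
from `H` having an edge at all.
-/

namespace SimpleGraph

variable {V : Type*} {G H : SimpleGraph V}

lemma Reachable.exists_dist_eq_and_dist_eq {x y : V} (hr : G.Reachable x y) {a b : ℕ}
    (h : G.dist x y = a + b) : ∃ z, G.dist x z = a ∧ G.dist z y = b := by
  obtain ⟨p, hp⟩ := hr.exists_walk_length_eq_dist
  refine ⟨p.getVert a, ?_⟩
  have hxz : G.dist x (p.getVert a) ≤ a := (dist_le (p.take a)).trans (by simp)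
  have hzy : G.dist (p.getVert a) y ≤ b := (dist_le (p.drop a)).trans (by simp; omega)
  have := (p.take a).reachable.dist_triangle_left y
  omega

lemma dist_le_mul_length {k : ℕ} (hG : G.Connected) (hk : ∀ u v, H.Adj u v → G.dist u v ≤ k) :
    ∀ {x y : V} (q : H.Walk x y), G.dist x y ≤ k * q.length
  | _, _, .nil => by simp
  | x, y, .cons (v := z) hxz q => by
      have := hG.dist_triangle (u := x) (v := z) (w := y)
      have := dist_le_mul_length hG hk q
      have := hk _ _ hxz
      rw [Walk.length_cons, mul_add_one]
      omega

lemma dist_le_of_dist_eq_mul {k : ℕ} (hG : G.Connected) (hH : H.Connected)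
    (hk : ∀ u v, G.dist u v = k → H.Adj u v) :
    ∀ (i : ℕ) {x y : V}, G.dist x y = i * k → H.dist x y ≤ i
  | 0, x, y, h => by
      rw [zero_mul, hG.dist_eq_zero_iff] at h
      simp [h]
  | i + 1, x, y, h => by
      obtain ⟨z, hxz, hzy⟩ :=
        (hG.preconnected x y).exists_dist_eq_and_dist_eq (h.trans (by ring : _ = k + i * k))
      have := dist_eq_one_iff_adj.mpr (hk _ _ hxz)
      have := dist_le_of_dist_eq_mul hG hH hk i hzy
      have := hH.dist_triangle (u := x) (v := z) (w := y)
      omega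

theorem dist_eq_of_dist_eq_mul {k : ℕ} (hG : G.Connected) (hH : H.Connected) (hk : 0 < k)
    (hadj : ∀ u v, H.Adj u v ↔ G.dist u v = k) {i : ℕ} {x y : V} (h : G.dist x y = i * k) :
    H.dist x y = i := by
  refine le_antisymm (dist_le_of_dist_eq_mul hG hH (fun u v ↦ (hadj u v).2) i h) ?_
  obtain ⟨q, hq⟩ := hH.exists_walk_length_eq_dist x y
  have := dist_le_mul_length hG (fun u v huv ↦ ((hadj u v).1 huv).le) q
  rw [h, hq, mul_comm k] at this
  exact Nat.le_of_mul_le_mul_right this hk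

end SimpleGraph

theorem sigma_on_multiples_of_inv_one_general {V : Type*} (G H : SimpleGraph V) (δ : ℕ)
    (hδ : 1 ≤ δ) (σ : Equiv.Perm ℕ)
    (hG : IsMetricallyHomogeneous G) (hdiam : HasDiameter G δ)
    (hH : IsMetricallyHomogeneous H)
    (htw : ∀ x y : V, x ≠ y → H.dist x y = σ (G.dist x y)) :
    ∀ i : ℕ, 0 < i → i * σ.symm 1 ≤ δ → σ (i * σ.symm 1) = i := by
  intro i hi hik
  obtain ⟨x₀, y₀, hx₀y₀⟩ := hdiam.2
  have hne : x₀ ≠ y₀ := by rintro rfl; simp at hx₀y₀; omega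
  have hadj_of_ne : ∀ u v, u ≠ v → (H.Adj u v ↔ G.dist u v = σ.symm 1) := fun u v huv ↦ by
    rw [← dist_eq_one_iff_adj, htw u v huv, Equiv.eq_symm_apply]
  have hk : 0 < σ.symm 1 := by
    have : Nontrivial V := nontrivial_of_ne x₀ y₀ hne
    obtain ⟨z, hz⟩ := hH.1.preconnected.exists_adj_of_nontrivial x₀
    rw [← (hadj_of_ne _ _ hz.ne).1 hz]
    exact hG.1.pos_dist_of_ne hz.ne
  have hadj : ∀ u v, H.Adj u v ↔ G.dist u v = σ.symm 1 := fun u v ↦ by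
    rcases eq_or_ne u v with rfl | huv
    · simp only [SimpleGraph.irrefl, dist_self, false_iff]; omega
    · exact hadj_of_ne u v huv
  obtain ⟨y, hxy, -⟩ := (hG.1.preconnected x₀ y₀).exists_dist_eq_and_dist_eq
    (a := i * σ.symm 1) (b := δ - i * σ.symm 1) (by omega)
  have hx₀y : x₀ ≠ y := by
    rintro rfl
    rw [dist_self] at hxy
    exact (Nat.mul_pos hi hk).ne hxy
  rw [← hxy, ← htw x₀ y hx₀y]
  exact SimpleGraph.dist_eq_of_dist_eq_mul hG.1 hH.1 hk hadj hxy

/-- if `Γ` is twistable by `σ` and `k = σ⁻¹(1)`, then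
`σ(i·k) = i` whenever `i·k ≤ δ`. -/
theorem sigma_on_multiples_of_inv_one {V : Type*} (G H : SimpleGraph V) (δ : ℕ)
    (hδ : 1 ≤ δ) (σ : Equiv.Perm ℕ)
    (hG : IsMetricallyHomogeneous G) (hdiam : HasDiameter G δ)
    (hperm : ∀ i ∈ Finset.Icc 1 δ, σ i ∈ Finset.Icc 1 δ)
    (hH : IsMetricallyHomogeneous H)
    (htw : ∀ x y : V, x ≠ y → H.dist x y = σ (G.dist x y)) :
    ∀ i : ℕ, 0 < i → i * σ.symm 1 ≤ δ → σ (i * σ.symm 1) = i :=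
  sigma_on_multiples_of_inv_one_general G H δ hδ σ hG hdiam hH htw
end

section
/- Let Γ be a metrically homogeneous graph and let σ be a non-trivial permutation of the set of distances of Γ such that Γ^σ is also a metrically homogeneous graph. Then the diameter δ of Γ is finite. -/
open SimpleGraph

/-!
If `G` had unbounded diameter, every `n` would be a distance of `G`, so `H` would be the path-metric
graph whose metric is `σ ∘ dist_G`, and the triangle inequality of `H` along a geodesic would make
`σ` subadditive. A subadditive permutation of `ℕ` fixing `0` is the identity: with `m = σ⁻¹ 1` we
get `σ (k * m) ≤ k` for all `k`, which injectivity upgrades to equality; hence `σ 1 * m = 1`, so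
`σ 1 = 1` and then `σ n ≤ n` for all `n`, again forcing `σ = 1`.
-/

theorem eq_self_of_injective_of_le_self {α : Type*} [LinearOrder α] [WellFoundedLT α]
    {f : α → α} (hf : Function.Injective f) (hle : ∀ a, f a ≤ a) (a : α) : f a = a := by
  induction a using WellFoundedLT.induction with
  | _ a ih =>
    by_contra hne
    have hlt : f a < a := lt_of_le_of_ne (hle a) hne
    exact hne (hf (ih (f a) hlt))

namespace Equiv.Perm

theorem map_mul_le_of_map_add_le {σ : Equiv.Perm ℕ} (h0 : σ 0 = 0)
    (hadd : ∀ a b, σ (a + b) ≤ σ a + σ b) (k a : ℕ) : σ (k * a) ≤ k * σ a := by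
  induction k with
  | zero => simp [h0]
  | succ k ih =>
    calc σ ((k + 1) * a) = σ (k * a + a) := by rw [Nat.succ_mul]
      _ ≤ σ (k * a) + σ a := hadd _ _
      _ ≤ (k + 1) * σ a := by rw [Nat.succ_mul]; omega

theorem eq_one_of_map_add_le {σ : Equiv.Perm ℕ} (h0 : σ 0 = 0)
    (hadd : ∀ a b, σ (a + b) ≤ σ a + σ b) : σ = 1 := by
  have hmul := map_mul_le_of_map_add_le h0 hadd
  set m := σ.symm 1
  have hσm : σ m = 1 := σ.apply_symm_apply 1
  have hm : m ≠ 0 := fun h => by simp [h, h0] at hσm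
  have hmultiples : ∀ k, σ (k * m) = k :=
    eq_self_of_injective_of_le_self
      (fun k l hkl => Nat.eq_of_mul_eq_mul_right (Nat.pos_of_ne_zero hm) (σ.injective hkl))
      (fun k => by simpa [hσm] using hmul k m)
  have h1 : σ 1 = 1 :=
    Nat.eq_one_of_mul_eq_one_right (σ.injective (hmultiples (σ 1)))
  ext n
  exact eq_self_of_injective_of_le_self σ.injective (fun n => by simpa [h1] using hmul n 1) n

end Equiv.Perm

namespace SimpleGraph

variable {V : Type*} {G : SimpleGraph V}

theorem Connected.exists_dist_eq_of_dist_eq_add (hG : G.Connected) {x y : V} {a b : ℕ}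
    (h : G.dist x y = a + b) : ∃ z, G.dist x z = a ∧ G.dist z y = b := by
  obtain ⟨p, hp⟩ := hG.exists_walk_length_eq_dist x y
  have hx := dist_le (p.take a)
  have hy := dist_le (p.drop a)
  have htri : G.dist x y ≤ G.dist x (p.getVert a) + G.dist (p.getVert a) y := hG.dist_triangle
  simp only [Walk.take_length, Walk.drop_length] at hx hy
  exact ⟨p.getVert a, by omega, by omega⟩

theorem Connected.exists_dist_eq_of_le_dist (hG : G.Connected) {x y : V} {n : ℕ}
    (h : n ≤ G.dist x y) : ∃ z, G.dist x z = n := by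
  obtain ⟨z, hz, -⟩ := hG.exists_dist_eq_of_dist_eq_add (Nat.add_sub_of_le h).symm
  exact ⟨z, hz⟩

end SimpleGraph

theorem twistable_implies_finite_diameter_general {V : Type*} (G H : SimpleGraph V)
    (σ : Equiv.Perm ℕ)
    (hG : IsMetricallyHomogeneous G)
    (hmaps' : ∀ n ∈ DistSet G, σ.symm n ∈ DistSet G)
    (hnontriv : ∃ n ∈ DistSet G, σ n ≠ n)
    (hH : IsMetricallyHomogeneous H)
    (htw : ∀ x y : V, x ≠ y → H.dist x y = σ (G.dist x y)) :
    ∃ δ : ℕ, ∀ x y : V, G.dist x y ≤ δ := by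
  by_contra! hunbdd
  have hdist : ∀ n, 0 < n → n ∈ DistSet G := fun n hn => by
    obtain ⟨x, y, hxy⟩ := hunbdd n
    obtain ⟨z, hz⟩ := hG.1.exists_dist_eq_of_le_dist hxy.le
    exact ⟨hn, x, z, hz⟩
  have h0 : σ 0 = 0 := by
    by_contra h
    simpa using (hmaps' (σ 0) (hdist _ (Nat.pos_of_ne_zero h))).1
  have hHdist : ∀ x y, H.dist x y = σ (G.dist x y) := fun x y => by
    rcases eq_or_ne x y with rfl | hxy
    · simp [h0]
    · exact htw x y hxy
  have hadd : ∀ a b, σ (a + b) ≤ σ a + σ b := fun a b => by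
    obtain ⟨x, y, hxy⟩ := hunbdd (a + b)
    obtain ⟨z, hz⟩ := hG.1.exists_dist_eq_of_le_dist hxy.le
    obtain ⟨w, hxw, hwz⟩ := hG.1.exists_dist_eq_of_dist_eq_add (b := b) hz
    have := hH.1.dist_triangle (u := x) (v := w) (w := z)
    rwa [hHdist, hHdist, hHdist, hz, hxw, hwz] at this
  obtain ⟨n, -, hn⟩ := hnontriv
  exact hn (by rw [Equiv.Perm.eq_one_of_map_add_le h0 hadd]; rfl)

/-- a metrically homogeneous graph admitting a non-trivial twist
has finite diameter. -/
theorem twistable_implies_finite_diameter {V : Type*} (G H : SimpleGraph V)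
    (σ : Equiv.Perm ℕ)
    (hG : IsMetricallyHomogeneous G)
    (hmaps : ∀ n ∈ DistSet G, σ n ∈ DistSet G)
    (hmaps' : ∀ n ∈ DistSet G, σ.symm n ∈ DistSet G)
    (hnontriv : ∃ n ∈ DistSet G, σ n ≠ n)
    (hH : IsMetricallyHomogeneous H)
    (htw : ∀ x y : V, x ≠ y → H.dist x y = σ (G.dist x y)) :
    ∃ δ : ℕ, ∀ x y : V, G.dist x y ≤ δ :=
  twistable_implies_finite_diameter_general G H σ hG hmaps' hnontriv hH htw
end

section
/- Let Γ be the n-cycle C_n with n ≥ 3, so that Γ is a metrically homogeneous graph of diameter δ = ⌊n/2⌋. Then the permutations σ of {1,…,δ} for which Γ^σ is a metrically homogeneous graph are exactly the maps μ_k for k a unit modulo n, where μ_k sends each distance i to the element of {1,…,δ} representing the class ±ki modulo n; i.e., the group of such permutations is U_n/(±1) acting on the set of distances. -/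
open SimpleGraph

/-!
On `ZMod n` the path metric of the cycle is `d(x, y) = |x - y|`, where `|a|` is the absolute value
of the representative of `a` in `(-n/2, n/2]` (`ZMod.valMinAbs`). Multiplication by a unit `u` is
a bijection, so pulling the cycle back along it gives an isomorphic, hence metrically homogeneous,
graph with distance `|u (x - y)|`: this realizes the twist `μ_u`. Conversely, if `d^σ` is the path
metric of a connected graph `H` and `σ j = 1`, the edges of `H` are the pairs with `x - y = ±j`;
connectedness makes `j` an additive generator of `ZMod n`, i.e. a unit, and `H` is the pullback of
the cycle along multiplication by `j⁻¹`, so `σ = μ_{j⁻¹}`. The cycle itself is metrically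
homogeneous because a partial isometry preserves differences up to sign, which forces it to be the
restriction of a translation or of a reflection.
-/

namespace SimpleGraph

variable {V V' : Type*} {G : SimpleGraph V} {G' : SimpleGraph V'}

theorem Hom.edist_le (f : G →g G') (u v : V) : G'.edist (f u) (f v) ≤ G.edist u v := by
  by_cases h : G.Reachable u v
  · obtain ⟨p, hp⟩ := h.exists_walk_length_eq_edist
    rw [← hp, ← Walk.length_map f p]
    exact (p.map f).edist_le
  · rw [edist_eq_top_of_not_reachable h]
    exact le_top

theorem Iso.edist_eq (e : G ≃g G') (u v : V) : G'.edist (e u) (e v) = G.edist u v :=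
  le_antisymm (e.toHom.edist_le u v) (by simpa using e.symm.toHom.edist_le (e u) (e v))

theorem Iso.dist_eq (e : G ≃g G') (u v : V) : G'.dist (e u) (e v) = G.dist u v :=
  congrArg ENat.toNat (e.edist_eq u v)

theorem Reachable.sub_mem {A : Type*} [AddGroup A] {H : SimpleGraph A}
    (K : AddSubgroup A) (hK : ∀ x y, H.Adj x y → x - y ∈ K) {x y : A} (h : H.Reachable x y) :
    x - y ∈ K := by
  obtain ⟨p⟩ := h
  induction p with
  | nil => simp
  | @cons a b c hab p ih => simpa using K.add_mem (hK a b hab) ih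

end SimpleGraph

theorem IsMetricallyHomogeneous.of_iso {V V' : Type*} {G : SimpleGraph V} {G' : SimpleGraph V'}
    (e : G ≃g G') (hG : IsMetricallyHomogeneous G) : IsMetricallyHomogeneous G' := by
  refine ⟨e.connected_iff.mp hG.1, fun s f hf => ?_⟩
  obtain ⟨g, hg, hgf⟩ := hG.2 (s.map e.symm.toEquiv.toEmbedding) (e.symm ∘ f ∘ e) <| by
    intro x hx y hy
    rw [Finset.mem_map_equiv] at hx hy
    rw [← e.dist_eq, ← e.dist_eq x y]
    simpa using hf (e x) hx (e y) hy
  refine ⟨(e.symm.toEquiv.trans g).trans e.toEquiv, fun x y => ?_, fun x hx => ?_⟩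
  · simp [e.dist_eq, e.symm.dist_eq, hg]
  · have hx' : e.symm x ∈ s.map e.symm.toEquiv.toEmbedding :=
      Finset.mem_map_equiv.2 ((e.apply_symm_apply x).symm ▸ hx)
    simp [hgf _ hx']

theorem exists_eq_add_or_eq_sub_of_sub_eq_or_eq_neg {A : Type*} [AddCommGroup A] {s : Set A}
    {f : A → A} (h : ∀ x ∈ s, ∀ y ∈ s, f x - f y = x - y ∨ f x - f y = -(x - y)) :
    ∃ c, (∀ x ∈ s, f x = x + c) ∨ (∀ x ∈ s, f x = c - x) := by
  rcases s.eq_empty_or_nonempty with rfl | ⟨a, ha⟩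
  · exact ⟨0, Or.inl fun x hx => hx.elim⟩
  by_contra! hne
  obtain ⟨⟨x, hx, hx_transl⟩, -⟩ := hne (f a - a)
  obtain ⟨-, y, hy, hy_refl⟩ := hne (f a + a)
  have hx_refl : f x = f a + a - x := by
    rcases h x hx a ha with hxa | hxa
    · exact absurd (by rw [← sub_add_cancel (f x) (f a), hxa]; abel) hx_transl
    · rw [← sub_add_cancel (f x) (f a), hxa]; abel
  have hy_transl : f y = y + (f a - a) := by
    rcases h y hy a ha with hya | hya
    · rw [← sub_add_cancel (f y) (f a), hya]; abel
    · exact absurd (by rw [← sub_add_cancel (f y) (f a), hya]; abel) hy_refl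
  -- `x` is translated like `y`, or `y` is reflected like `x`
  rcases h x hx y hy with hxy | hxy
  · exact hx_transl (by rw [← sub_add_cancel (f x) (f y), hxy, hy_transl]; abel)
  · exact hy_refl (by rw [← sub_sub_cancel (f x) (f y), hxy, hx_refl]; abel)

namespace ZMod

variable {n : ℕ}

theorem natAbs_valMinAbs_intCast_le [NeZero n] (k : ℤ) :
    (k : ZMod n).valMinAbs.natAbs ≤ k.natAbs :=
  natAbs_min_of_le_div_two n _ k (coe_valMinAbs _) (natAbs_valMinAbs_le _)

theorem natAbs_valMinAbs_natCast_of_le_half {i : ℕ} (hi : i ≤ n / 2) :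
    (i : ZMod n).valMinAbs.natAbs = i := by
  rw [valMinAbs_natCast_of_le_half hi, Int.natAbs_natCast]

theorem natCast_natAbs_valMinAbs_eq_or [NeZero n] (a : ZMod n) :
    (a.valMinAbs.natAbs : ZMod n) = a ∨ (a.valMinAbs.natAbs : ZMod n) = -a := by
  rw [natCast_natAbs_valMinAbs]
  split_ifs <;> simp

theorem natAbs_valMinAbs_mul_congr {a b : ZMod n}
    (h : a.valMinAbs.natAbs = b.valMinAbs.natAbs) (c : ZMod n) :
    (c * a).valMinAbs.natAbs = (c * b).valMinAbs.natAbs := by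
  rw [natAbs_valMinAbs_eq_natAbs_valMinAbs] at h ⊢
  rcases h with rfl | rfl
  exacts [Or.inl rfl, Or.inr (mul_neg c b)]

theorem natAbs_valMinAbs_units_mul_eq_iff (u : (ZMod n)ˣ) (a b : ZMod n) :
    (u * a).valMinAbs.natAbs = (u * b).valMinAbs.natAbs ↔
      a.valMinAbs.natAbs = b.valMinAbs.natAbs :=
  ⟨fun h => by simpa using natAbs_valMinAbs_mul_congr h (u⁻¹ : (ZMod n)ˣ),
    fun h => natAbs_valMinAbs_mul_congr h u⟩

end ZMod

section zmodCycleGraph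

variable {n : ℕ}

theorem zmodCycleGraph_adj (x y : ZMod n) :
    (zmodCycleGraph n).Adj x y ↔ x ≠ y ∧ (x - y = 1 ∨ y - x = 1) := Iff.rfl

theorem zmodCycleGraph_exists_walk_add_natCast (x : ZMod n) (m : ℕ) :
    ∃ p : (zmodCycleGraph n).Walk x (x + m), p.length ≤ m := by
  induction m with
  | zero => exact ⟨Walk.nil.copy rfl (by simp), by simp⟩
  | succ m ih =>
    obtain ⟨p, hp⟩ := ih
    by_cases heq : x + m = x + (m + 1 : ℕ)
    · exact ⟨p.copy rfl heq, by rw [Walk.length_copy]; omega⟩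
    · have hadj : (zmodCycleGraph n).Adj (x + m) (x + (m + 1 : ℕ)) :=
        (zmodCycleGraph_adj _ _).2 ⟨heq, Or.inr (by push_cast; ring)⟩
      exact ⟨p.concat hadj, by rw [Walk.length_concat]; omega⟩

theorem zmodCycleGraph_exists_walk_length_le [NeZero n] (x y : ZMod n) :
    ∃ p : (zmodCycleGraph n).Walk x y, p.length ≤ (x - y).valMinAbs.natAbs := by
  rcases ZMod.natCast_natAbs_valMinAbs_eq_or (x - y) with h | h
  · obtain ⟨p, hp⟩ := zmodCycleGraph_exists_walk_add_natCast y (x - y).valMinAbs.natAbs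
    exact ⟨(p.copy rfl (by rw [h]; abel)).reverse, by simpa using hp⟩
  · obtain ⟨p, hp⟩ := zmodCycleGraph_exists_walk_add_natCast x (x - y).valMinAbs.natAbs
    exact ⟨p.copy rfl (by rw [h]; abel), by simpa using hp⟩

theorem zmodCycleGraph_natAbs_valMinAbs_sub_le_length [NeZero n] {x y : ZMod n}
    (p : (zmodCycleGraph n).Walk x y) : (x - y).valMinAbs.natAbs ≤ p.length := by
  induction p with
  | nil => simp
  | @cons a b c hab p ih =>
    have hstep : (a - b).valMinAbs.natAbs ≤ 1 := by
      obtain ⟨-, h | h⟩ := hab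
      · simpa [h] using ZMod.natAbs_valMinAbs_intCast_le (n := n) 1
      · simpa [← neg_sub b a, h] using ZMod.natAbs_valMinAbs_intCast_le (n := n) 1
    calc (a - c).valMinAbs.natAbs
        ≤ ((a - b).valMinAbs + (b - c).valMinAbs).natAbs := by
          simpa using ZMod.natAbs_valMinAbs_add_le (a - b) (b - c)
      _ ≤ (a - b).valMinAbs.natAbs + (b - c).valMinAbs.natAbs := Int.natAbs_add_le _ _
      _ ≤ (Walk.cons hab p).length := by rw [Walk.length_cons]; omega

theorem zmodCycleGraph_connected [NeZero n] : (zmodCycleGraph n).Connected :=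
  .mk fun x y => (zmodCycleGraph_exists_walk_length_le x y).elim fun p _ => ⟨p⟩

theorem zmodCycleGraph_dist [NeZero n] (x y : ZMod n) :
    (zmodCycleGraph n).dist x y = (x - y).valMinAbs.natAbs := by
  refine le_antisymm ?_ ?_
  · obtain ⟨p, hp⟩ := zmodCycleGraph_exists_walk_length_le x y
    exact (dist_le p).trans hp
  · obtain ⟨p, hp⟩ := zmodCycleGraph_connected.exists_walk_length_eq_dist x y
    exact hp ▸ zmodCycleGraph_natAbs_valMinAbs_sub_le_length p

theorem isMetricallyHomogeneous_zmodCycleGraph [NeZero n] :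
    IsMetricallyHomogeneous (zmodCycleGraph n) := by
  refine ⟨zmodCycleGraph_connected, fun s f hf => ?_⟩
  have hsign : ∀ x ∈ (s : Set (ZMod n)), ∀ y ∈ (s : Set (ZMod n)),
      f x - f y = x - y ∨ f x - f y = -(x - y) := fun x hx y hy => by
    simpa [zmodCycleGraph_dist, ZMod.natAbs_valMinAbs_eq_natAbs_valMinAbs] using hf x hx y hy
  obtain ⟨c, hc | hc⟩ := exists_eq_add_or_eq_sub_of_sub_eq_or_eq_neg hsign
  · refine ⟨Equiv.addRight c, fun x y => ?_, fun x hx => (hc x hx).symm⟩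
    simp [zmodCycleGraph_dist]
  · refine ⟨Equiv.subLeft c, fun x y => ?_, fun x hx => (hc x hx).symm⟩
    rw [zmodCycleGraph_dist, zmodCycleGraph_dist, Equiv.subLeft_apply, Equiv.subLeft_apply,
      sub_sub_sub_cancel_left, ← neg_sub, ZMod.natAbs_valMinAbs_neg]

end zmodCycleGraph

section Twist

variable {n : ℕ} [NeZero n]

theorem zmodCycleGraph_comap_mulLeft_dist (u : (ZMod n)ˣ) (x y : ZMod n) :
    ((zmodCycleGraph n).comap (Units.mulLeft u)).dist x y =
      (u * (x - y)).valMinAbs.natAbs := by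
  rw [← (Iso.comap (Units.mulLeft u) (zmodCycleGraph n)).dist_eq, Iso.comap_apply,
    Iso.comap_apply, zmodCycleGraph_dist, Units.mulLeft_apply, mul_sub]

theorem forall_natAbs_valMinAbs_mul_sub_eq_iff {σ : ℕ → ℕ}
    (hσ : ∀ i ∈ Finset.Icc 1 (n / 2), σ i ∈ Finset.Icc 1 (n / 2)) (c : ZMod n) :
    (∀ x y : ZMod n, x ≠ y → (c * (x - y)).valMinAbs.natAbs = σ (x - y).valMinAbs.natAbs) ↔
      ∀ i ∈ Finset.Icc 1 (n / 2), (σ i : ZMod n) = c * i ∨ (σ i : ZMod n) = -(c * i) := by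
  simp_rw [← ZMod.natAbs_valMinAbs_eq_natAbs_valMinAbs]
  constructor
  · intro h i hi
    have hσi := Finset.mem_Icc.1 (hσ i hi)
    rw [Finset.mem_Icc] at hi
    have hi0 : (i : ZMod n) ≠ 0 := by
      rw [Ne, ZMod.natCast_eq_zero_iff]
      exact Nat.not_dvd_of_pos_of_lt (by omega) (by omega)
    have := h i 0 hi0
    rw [sub_zero, ZMod.natAbs_valMinAbs_natCast_of_le_half hi.2] at this
    rw [ZMod.natAbs_valMinAbs_natCast_of_le_half hσi.2, this]
  · intro h x y hxy
    set i := (x - y).valMinAbs.natAbs with hi_def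
    have hi : i ∈ Finset.Icc 1 (n / 2) := Finset.mem_Icc.2
      ⟨Nat.one_le_iff_ne_zero.2 (by simpa [hi_def, sub_eq_zero] using hxy),
        ZMod.natAbs_valMinAbs_le _⟩
    rw [← ZMod.natAbs_valMinAbs_natCast_of_le_half (Finset.mem_Icc.1 (hσ i hi)).2, h i hi]
    exact (ZMod.natAbs_valMinAbs_mul_congr
      (ZMod.natAbs_valMinAbs_natCast_of_le_half (Finset.mem_Icc.1 hi).2) c).symm

theorem exists_eq_comap_mulLeft_of_dist_eq (hn : 2 ≤ n) {σ : Equiv.Perm ℕ}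
    (hσ : ∀ i ∈ Finset.Icc 1 (n / 2), σ i ∈ Finset.Icc 1 (n / 2))
    {H : SimpleGraph (ZMod n)} (hH : H.Connected)
    (hdist : ∀ x y : ZMod n, x ≠ y → H.dist x y = σ ((zmodCycleGraph n).dist x y)) :
    ∃ u : (ZMod n)ˣ, H = (zmodCycleGraph n).comap (Units.mulLeft u) := by
  obtain ⟨j, hj, hσj⟩ : ∃ j ∈ Finset.Icc 1 (n / 2), σ j = 1 :=
    Finset.surjOn_of_injOn_of_card_le σ hσ σ.injective.injOn le_rfl
      (Finset.mem_Icc.2 ⟨le_rfl, by omega⟩)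
  rw [Finset.mem_Icc] at hj
  have hdist_one : ∀ x y, H.dist x y = 1 ↔ (x - y).valMinAbs.natAbs = j := by
    intro x y
    rcases eq_or_ne x y with rfl | hxy
    · simp only [dist_self, sub_self, ZMod.valMinAbs_zero, Int.natAbs_zero]
      omega
    · rw [hdist x y hxy, zmodCycleGraph_dist, ← hσj, σ.injective.eq_iff]
  have hadj : ∀ x y, H.Adj x y → x - y = j ∨ x - y = -j := fun x y hxy => by
    rw [← ZMod.natAbs_valMinAbs_eq_natAbs_valMinAbs,
      ZMod.natAbs_valMinAbs_natCast_of_le_half hj.2, ← hdist_one, dist_eq_one_iff_adj]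
    exact hxy
  obtain ⟨m, hm⟩ := AddSubgroup.mem_zmultiples_iff.1 <| by
    simpa using (hH.preconnected 1 0).sub_mem (AddSubgroup.zmultiples (j : ZMod n))
      fun x y hxy => (hadj x y hxy).elim (· ▸ AddSubgroup.mem_zmultiples _)
        (· ▸ neg_mem (AddSubgroup.mem_zmultiples _))
  obtain ⟨u, hu⟩ : IsUnit (j : ZMod n) :=
    IsUnit.of_mul_eq_one_right (m : ZMod n) (by simpa using hm)
  have hone : (1 : ZMod n).valMinAbs.natAbs = 1 := by
    exact_mod_cast ZMod.natAbs_valMinAbs_natCast_of_le_half (n := n) (i := 1) (by omega)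
  refine ⟨u⁻¹, SimpleGraph.ext <| funext₂ fun x y => propext ?_⟩
  rw [← dist_eq_one_iff_adj, ← dist_eq_one_iff_adj, hdist_one,
    zmodCycleGraph_comap_mulLeft_dist, ← ZMod.natAbs_valMinAbs_natCast_of_le_half hj.2, ← hu,
    ← ZMod.natAbs_valMinAbs_units_mul_eq_iff u⁻¹, Units.inv_mul, hone]

end Twist

/-- the twists of the `n`-cycle (`n ≥ 3`) are exactly the maps
`μ_k : i ↦ ±ki (mod n)` for `k` a unit modulo `n`. -/
theorem twists_of_cycle (n : ℕ) (hn : 3 ≤ n) (σ : Equiv.Perm ℕ)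
    (hperm : ∀ i ∈ Finset.Icc 1 (n / 2), σ i ∈ Finset.Icc 1 (n / 2)) :
    (∃ H : SimpleGraph (ZMod n), IsMetricallyHomogeneous H ∧
        ∀ x y : ZMod n, x ≠ y → H.dist x y = σ ((zmodCycleGraph n).dist x y)) ↔
    (∃ k : ℕ, Nat.gcd k n = 1 ∧ ∀ i ∈ Finset.Icc 1 (n / 2),
        ((σ i : ZMod n) = (k : ZMod n) * (i : ZMod n) ∨
         (σ i : ZMod n) = -((k : ZMod n) * (i : ZMod n)))) := by
  have : NeZero n := ⟨by omega⟩
  simp_rw [← forall_natAbs_valMinAbs_mul_sub_eq_iff hperm]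
  constructor
  · rintro ⟨H, hH, hdist⟩
    obtain ⟨u, rfl⟩ := exists_eq_comap_mulLeft_of_dist_eq (by omega) hperm hH.1 hdist
    refine ⟨(u : ZMod n).val, ZMod.val_coe_unit_coprime u, fun x y hxy => ?_⟩
    rw [ZMod.natCast_zmod_val, ← zmodCycleGraph_comap_mulLeft_dist, hdist x y hxy,
      zmodCycleGraph_dist]
  · rintro ⟨k, hk, hσ⟩
    let u := ZMod.unitOfCoprime k hk
    refine ⟨(zmodCycleGraph n).comap (Units.mulLeft u),
      isMetricallyHomogeneous_zmodCycleGraph.of_iso (Iso.comap _ _).symm, fun x y hxy => ?_⟩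
    rw [zmodCycleGraph_comap_mulLeft_dist, ZMod.coe_unitOfCoprime, hσ x y hxy,
      zmodCycleGraph_dist]
end

section
/- Let Γ be a metrically homogeneous antipodal graph of diameter 3. If Γ is not bipartite, then the transposition σ = (1,2) is the unique non-trivial permutation of {1,2,3} for which Γ^σ is metrically homogeneous. If Γ is bipartite, then no non-trivial such permutation exists. -/
open SimpleGraph

/-! An isometry of an antipodal graph that fixes `b` also fixes its antipode `b'`; moving a
geodesic from `b` to `b'` by such isometries gives the antipodal law `d(a,b) + d(a,b') = δ`.

If the twist of `Γ` by `σ` is a graph `H`, the edges of `H` are the pairs at `Γ`-distance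
`k = σ⁻¹(1)`, so `H` is the distance-`k` graph of `Γ`. For `k = 1` it is `Γ` itself, so `σ`
fixes `3`; for `k = 3` it is the antipodal matching, which is disconnected; for `k = 2` it
preserves the colour classes of a bipartite `Γ`, so it is disconnected again. A non-bipartite
`Γ` contains a triangle of type `(1,2,2)`, hence by homogeneity one over every edge: adjacent
vertices are at distance `2` in `H`, while by the antipodal law antipodal pairs stay at
distance `3`. So `H` is the twist by `(1 2)`, and it is homogeneous because its metric
determines that of `Γ`. -/

section

variable {V : Type*} {G H : SimpleGraph V}

namespace SimpleGraph

def distanceGraph (G : SimpleGraph V) (k : ℕ) : SimpleGraph V where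
  Adj x y := x ≠ y ∧ G.dist x y = k
  symm := ⟨fun _ _ h => ⟨h.1.symm, G.dist_comm ▸ h.2⟩⟩
  loopless := ⟨fun _ h => h.1 rfl⟩

@[simp]
lemma distanceGraph_adj {k : ℕ} {x y : V} :
    (G.distanceGraph k).Adj x y ↔ x ≠ y ∧ G.dist x y = k :=
  Iff.rfl

lemma distanceGraph_adj_of_dist_eq {k : ℕ} (hk : k ≠ 0) {x y : V} (h : G.dist x y = k) :
    (G.distanceGraph k).Adj x y :=
  ⟨fun hxy => hk (by rw [← h, hxy, dist_self]), h⟩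

lemma distanceGraph_one : G.distanceGraph 1 = G := by
  ext x y
  rw [distanceGraph_adj, dist_eq_one_iff_adj]
  exact ⟨And.right, fun h => ⟨h.ne, h⟩⟩

lemma Connected.exists_dist_eq_of_le (hc : G.Connected) {x y : V} {i : ℕ}
    (hi : i ≤ G.dist x y) : ∃ u, G.dist x u = i ∧ G.dist u y = G.dist x y - i := by
  obtain ⟨p, hp⟩ := hc.exists_walk_length_eq_dist x y
  have hxu := dist_le (p.take i)
  have huy := dist_le (p.drop i)
  have := hc.dist_triangle (u := x) (v := p.getVert i) (w := y)
  simp only [Walk.take_length, Walk.drop_length] at hxu huy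
  exact ⟨p.getVert i, by omega, by omega⟩

lemma Coloring.eq_of_reachable_distanceGraph (c : G.Coloring Bool) (hc : G.Connected)
    {k : ℕ} (hk : Even k) {x y : V} (h : (G.distanceGraph k).Reachable x y) : c x = c y := by
  obtain ⟨p⟩ := h
  induction p with
  | nil => rfl
  | @cons a b _ hab _ ih =>
    obtain ⟨q, hq⟩ := hc.exists_walk_length_eq_dist a b
    rw [hab.2] at hq
    exact (Bool.eq_iff_iff.mpr ((c.even_length_iff_congr q).mp (hq ▸ hk))).trans ih

end SimpleGraph

namespace IsAntipodal

variable {δ : ℕ}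

lemma eq_or_dist_eq_of_reachable (hant : IsAntipodal G δ) {x y : V}
    (h : (G.distanceGraph δ).Reachable x y) : y = x ∨ G.dist x y = δ := by
  obtain ⟨p⟩ := h
  induction p with
  | nil => exact .inl rfl
  | cons hxz _ ih =>
    rcases ih with rfl | hzy
    · exact .inr hxz.2
    · exact .inl ((hant _).unique hzy (by rw [G.dist_comm]; exact hxz.2))

lemma not_connected_distanceGraph (hant : IsAntipodal G δ) (hδ : δ ≠ 1) {x y : V}
    (hxy : G.Adj x y) : ¬ (G.distanceGraph δ).Connected := fun h => by
  rcases hant.eq_or_dist_eq_of_reachable (h.preconnected x y) with rfl | hδxy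
  · exact G.loopless.irrefl _ hxy
  · exact hδ (hδxy ▸ dist_eq_one_iff_adj.mpr hxy)

end IsAntipodal

namespace IsMetricallyHomogeneous

lemma exists_isometry_of_dist_eq (hG : IsMetricallyHomogeneous G) {a b c e : V}
    (h : G.dist a b = G.dist c e) :
    ∃ g : V ≃ V, (∀ x y, G.dist (g x) (g y) = G.dist x y) ∧ g a = c ∧ g b = e := by
  classical
  rcases eq_or_ne b a with rfl | hba
  · obtain rfl : c = e := hG.1.dist_eq_zero_iff.mp (by rw [← h, dist_self])
    obtain ⟨g, hg, hgs⟩ := hG.2 {b} (fun _ => c) (by simp)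
    exact ⟨g, hg, hgs b (by simp), hgs b (by simp)⟩
  · obtain ⟨g, hg, hgs⟩ := hG.2 {a, b} (fun v => if v = a then c else e) (by
      simp [hba, h, SimpleGraph.dist_comm])
    exact ⟨g, hg, by simp [hgs], by simp [hgs, hba]⟩

lemma exists_dist_eq_of_realizesTriangle (hG : IsMetricallyHomogeneous G) {a b c : ℕ}
    (h : RealizesTriangle G a b c) {x y : V} (hxy : G.dist x y = a) :
    ∃ z, G.dist y z = b ∧ G.dist x z = c := by
  obtain ⟨x₀, y₀, z₀, h₁, h₂, h₃⟩ := h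
  obtain ⟨g, hg, rfl, rfl⟩ := hG.exists_isometry_of_dist_eq (h₁.trans hxy.symm)
  exact ⟨g z₀, by rw [hg, h₂], by rw [hg, h₃]⟩

lemma of_dist_eq_comp (hG : IsMetricallyHomogeneous G) (hH : H.Connected) {φ : ℕ → ℕ}
    (hφ : φ.Injective) (h : ∀ x y, H.dist x y = φ (G.dist x y)) :
    IsMetricallyHomogeneous H := by
  refine ⟨hH, fun s f hf => ?_⟩
  obtain ⟨g, hg, hgs⟩ := hG.2 s f fun x hx y hy => hφ (by rw [← h, ← h, hf x hx y hy])
  exact ⟨g, fun x y => by rw [h, h, hg], hgs⟩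

lemma dist_add_dist_of_isAntipodal (hG : IsMetricallyHomogeneous G) {δ : ℕ}
    (hant : IsAntipodal G δ) {a b b' : V} (hbb' : G.dist b b' = δ) (hab : G.dist a b ≤ δ) :
    G.dist a b + G.dist a b' = δ := by
  obtain ⟨u, hbu, hub'⟩ := hG.1.exists_dist_eq_of_le (x := b) (i := G.dist a b) (hbb' ▸ hab)
  obtain ⟨g, hg, hga, hgb⟩ := hG.exists_isometry_of_dist_eq (G.dist_comm.trans hbu)
  have hgb' : g b' = b' := (hant b).unique (by rw [← hgb, hg, hbb']) hbb'
  have hab' := hg u b'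
  rw [hga, hgb', hub', hbb'] at hab'
  omega

end IsMetricallyHomogeneous

lemma dist_ne_dist_of_adj_of_not_realizesTriangle (hG : IsMetricallyHomogeneous G)
    (hdiam : HasDiameter G 3) (hant : IsAntipodal G 3) (hno : ¬ RealizesTriangle G 1 2 2)
    {x y : V} (hxy : G.Adj x y) (z : V) : G.dist z x ≠ G.dist z y := by
  intro h
  have hxy₁ : G.dist x y = 1 := dist_eq_one_iff_adj.mpr hxy
  rcases (by have := hdiam.1 z x; omega :
      G.dist z x = 0 ∨ G.dist z x = 1 ∨ G.dist z x = 2 ∨ G.dist z x = 3) with h₀ | h₁ | h₂ | h₃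
  · rw [hG.1.dist_eq_zero_iff] at h₀
    subst h₀
    rw [dist_self] at h
    omega
  · -- `z, x, y` span a triangle of type `(1,1,1)`; replacing `y` by its antipode gives `(1,2,2)`.
    obtain ⟨y', hyy', -⟩ := hant y
    have hzy' := hG.dist_add_dist_of_isAntipodal hant hyy' (hdiam.1 z y)
    have hxy' := hG.dist_add_dist_of_isAntipodal hant hyy' (hdiam.1 x y)
    exact hno ⟨z, x, y', h₁, by omega, by omega⟩
  · exact hno ⟨x, y, z, hxy₁, by rw [G.dist_comm]; omega, by rw [G.dist_comm]; omega⟩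
  · exact hxy.ne ((hant z).unique h₃ (h ▸ h₃))

lemma realizesTriangle_of_not_isBipartiteGraph (hG : IsMetricallyHomogeneous G)
    (hdiam : HasDiameter G 3) (hant : IsAntipodal G 3) (hnb : ¬ IsBipartiteGraph G) :
    RealizesTriangle G 1 2 2 := by
  by_contra hno
  obtain ⟨z, -, -⟩ := hdiam.2
  refine hnb ⟨fun v => decide (Even (G.dist z v)), fun x y hxy => ?_⟩
  have hne := dist_ne_dist_of_adj_of_not_realizesTriangle hG hdiam hant hno hxy z
  rcases hxy.diff_dist_adj (u := z) with h | h | h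
  · exact absurd h.symm hne
  · simp [h, Nat.even_add_one, -Nat.not_even_iff_odd]
  · have : G.dist z x = G.dist z y + 1 := by omega
    simp [this, Nat.even_add_one, -Nat.not_even_iff_odd]

lemma exists_adj_adj_distanceGraph_two (hG : IsMetricallyHomogeneous G)
    (htri : RealizesTriangle G 1 2 2) {x y : V} (hxy : G.dist x y = 1) :
    ∃ z, (G.distanceGraph 2).Adj x z ∧ (G.distanceGraph 2).Adj z y := by
  obtain ⟨z, hyz, hxz⟩ := hG.exists_dist_eq_of_realizesTriangle htri hxy
  exact ⟨z, distanceGraph_adj_of_dist_eq two_ne_zero hxz,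
    distanceGraph_adj_of_dist_eq two_ne_zero (G.dist_comm ▸ hyz)⟩

lemma connected_distanceGraph_two (hG : IsMetricallyHomogeneous G)
    (htri : RealizesTriangle G 1 2 2) : (G.distanceGraph 2).Connected := by
  have := hG.1.nonempty
  refine ⟨fun x y => ?_⟩
  obtain ⟨p⟩ := hG.1.preconnected x y
  induction p with
  | nil => rfl
  | cons hab _ ih =>
    obtain ⟨z, haz, hzb⟩ :=
      exists_adj_adj_distanceGraph_two hG htri (dist_eq_one_iff_adj.mpr hab)
    exact haz.reachable.trans (hzb.reachable.trans ih)

lemma dist_distanceGraph_two (hG : IsMetricallyHomogeneous G) (hdiam : HasDiameter G 3)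
    (hant : IsAntipodal G 3) (htri : RealizesTriangle G 1 2 2) (x y : V) :
    (G.distanceGraph 2).dist x y = Equiv.swap 1 2 (G.dist x y) := by
  have hH := connected_distanceGraph_two hG htri
  set H := G.distanceGraph 2
  have two_le : G.dist x y ≠ 0 → G.dist x y ≠ 2 → 2 ≤ H.dist x y := fun h₀ h₂ =>
    hH.one_lt_dist_of_ne_of_not_adj (fun hxy => h₀ (by rw [hxy, dist_self])) (h₂ ·.2)
  have le_two {a b : V} (h : G.dist a b = 1) : H.dist a b ≤ 2 := by
    obtain ⟨z, haz, hzb⟩ := exists_adj_adj_distanceGraph_two hG htri h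
    simpa using dist_le (haz.toWalk.append hzb.toWalk)
  rcases (by have := hdiam.1 x y; omega :
      G.dist x y = 0 ∨ G.dist x y = 1 ∨ G.dist x y = 2 ∨ G.dist x y = 3) with h | h | h | h
  · rw [hG.1.dist_eq_zero_iff.mp h, dist_self, dist_self,
      Equiv.swap_apply_of_ne_of_ne (by decide) (by decide)]
  · rw [h, Equiv.swap_apply_left]
    exact le_antisymm (le_two h) (two_le (by omega) (by omega))
  · rw [h, Equiv.swap_apply_right]
    exact dist_eq_one_iff_adj.mpr (distanceGraph_adj_of_dist_eq two_ne_zero h)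
  · rw [h, Equiv.swap_apply_of_ne_of_ne (by decide) (by decide)]
    obtain ⟨q, hxq, hqy⟩ := hG.1.exists_dist_eq_of_le (x := x) (y := y) (i := 1) (by omega)
    have hqy' : H.dist q y = 1 :=
      dist_eq_one_iff_adj.mpr (distanceGraph_adj_of_dist_eq two_ne_zero (by omega))
    have := hH.dist_triangle (u := x) (v := q) (w := y)
    have hne_two : H.dist x y ≠ 2 := fun h₂ => by
      -- a midpoint `w` would satisfy `d(w, x) + d(w, y) = 2 + 2`, against the antipodal law
      obtain ⟨w, hxw, hwy⟩ := hH.exists_dist_eq_of_le (x := x) (y := y) (i := 1) (by omega)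
      have hxw' := (dist_eq_one_iff_adj.mp hxw).2
      have hwy' := (dist_eq_one_iff_adj.mp (by omega : H.dist w y = 1)).2
      have := hG.dist_add_dist_of_isAntipodal hant h (hdiam.1 w x)
      rw [G.dist_comm] at hxw'
      omega
    have := le_two hxq
    have := two_le (by omega) (by omega)
    omega

lemma eq_distanceGraph_of_dist_eq {σ : Equiv.Perm ℕ}
    (hd : ∀ x y : V, x ≠ y → H.dist x y = σ (G.dist x y)) {k : ℕ} (hk : σ k = 1) :
    H = G.distanceGraph k := by
  ext x y
  rw [distanceGraph_adj, ← dist_eq_one_iff_adj]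
  by_cases hxy : x = y
  · simp [hxy]
  · rw [hd x y hxy, ← hk, σ.injective.eq_iff]
    simp [hxy]

theorem not_isBipartiteGraph_and_eq_swap_of_dist_eq (hG : IsMetricallyHomogeneous G)
    (hdiam : HasDiameter G 3) (hant : IsAntipodal G 3) {σ : Equiv.Perm ℕ}
    (hσ : ∀ i ∈ Finset.Icc 1 3, σ i ∈ Finset.Icc 1 3) (hnt : ∃ i ∈ Finset.Icc 1 3, σ i ≠ i)
    (hH : H.Connected) (hd : ∀ x y : V, x ≠ y → H.dist x y = σ (G.dist x y)) :
    ¬ IsBipartiteGraph G ∧ σ 1 = 2 ∧ σ 2 = 1 ∧ σ 3 = 3 := by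
  obtain ⟨a, b, hab⟩ := hdiam.2
  have hne : a ≠ b := fun h => by simp [h] at hab
  obtain ⟨c, hac, -⟩ := hG.1.exists_dist_eq_of_le (x := a) (y := b) (i := 1) (by omega)
  have hac' : G.Adj a c := dist_eq_one_iff_adj.mp hac
  simp only [Finset.mem_Icc] at hσ hnt
  have h₁ := hσ 1 (by norm_num)
  have h₂ := hσ 2 (by norm_num)
  have h₃ := hσ 3 (by norm_num)
  have h₁₂ : σ 1 ≠ σ 2 := σ.injective.ne (by decide)
  have h₁₃ : σ 1 ≠ σ 3 := σ.injective.ne (by decide)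
  have h₂₃ : σ 2 ≠ σ 3 := σ.injective.ne (by decide)
  rcases (by omega : σ 1 = 1 ∨ σ 2 = 1 ∨ σ 3 = 1) with hk | hk | hk
  · rw [eq_distanceGraph_of_dist_eq hd hk, distanceGraph_one] at hd
    have hσ₃ := hd a b hne
    rw [hab] at hσ₃
    obtain ⟨i, ⟨hi₁, hi₃⟩, hσi⟩ := hnt
    exfalso
    interval_cases i <;> omega
  · rw [eq_distanceGraph_of_dist_eq hd hk] at hH hd
    have hnb : ¬ IsBipartiteGraph G := fun ⟨f, hf⟩ => hf a c hac'
      ((Coloring.mk f (hf _ _)).eq_of_reachable_distanceGraph hG.1 even_two (hH.preconnected a c))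
    have htri := realizesTriangle_of_not_isBipartiteGraph hG hdiam hant hnb
    have hσ₁ := hd a c hac'.ne
    rw [dist_distanceGraph_two hG hdiam hant htri, hac, Equiv.swap_apply_left] at hσ₁
    exact ⟨hnb, by omega, hk, by omega⟩
  · rw [eq_distanceGraph_of_dist_eq hd hk] at hH
    exact absurd hH (hant.not_connected_distanceGraph (by decide) hac')

end

/-- for an antipodal metrically homogeneous graph of diameter 3,
if it is not bipartite then the transposition `(1,2)` is the unique non-trivial
twist; if it is bipartite there is no non-trivial twist. -/
theorem twists_antipodal_diameter_three {V : Type*} (G : SimpleGraph V)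
    (hG : IsMetricallyHomogeneous G) (hdiam : HasDiameter G 3)
    (hant : IsAntipodal G 3) :
    (¬ IsBipartiteGraph G →
      ∀ σ : Equiv.Perm ℕ, (∀ i ∈ Finset.Icc 1 3, σ i ∈ Finset.Icc 1 3) →
        (∃ i ∈ Finset.Icc 1 3, σ i ≠ i) →
        ((∃ H : SimpleGraph V, IsMetricallyHomogeneous H ∧
            ∀ x y : V, x ≠ y → H.dist x y = σ (G.dist x y)) ↔
          (σ 1 = 2 ∧ σ 2 = 1 ∧ σ 3 = 3))) ∧
    (IsBipartiteGraph G →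
      ∀ σ : Equiv.Perm ℕ, (∀ i ∈ Finset.Icc 1 3, σ i ∈ Finset.Icc 1 3) →
        (∃ i ∈ Finset.Icc 1 3, σ i ≠ i) →
        ¬ ∃ H : SimpleGraph V, IsMetricallyHomogeneous H ∧
            ∀ x y : V, x ≠ y → H.dist x y = σ (G.dist x y)) := by
  refine ⟨fun hnb σ hσ hnt => ⟨fun ⟨H, hH, hd⟩ =>
      (not_isBipartiteGraph_and_eq_swap_of_dist_eq hG hdiam hant hσ hnt hH.1 hd).2,
      fun ⟨h₁, h₂, h₃⟩ => ?_⟩,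
    fun hbip σ hσ hnt ⟨H, hH, hd⟩ =>
      (not_isBipartiteGraph_and_eq_swap_of_dist_eq hG hdiam hant hσ hnt hH.1 hd).1 hbip⟩
  have htri := realizesTriangle_of_not_isBipartiteGraph hG hdiam hant hnb
  refine ⟨G.distanceGraph 2, hG.of_dist_eq_comp (connected_distanceGraph_two hG htri)
    (Equiv.swap 1 2).injective (dist_distanceGraph_two hG hdiam hant htri), fun x y hxy => ?_⟩
  rw [dist_distanceGraph_two hG hdiam hant htri]
  have := hG.1.pos_dist_of_ne hxy
  rcases (by have := hdiam.1 x y; omega : G.dist x y = 1 ∨ G.dist x y = 2 ∨ G.dist x y = 3)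
    with h | h | h <;> simp [h, h₁, h₂, h₃, Equiv.swap_apply_of_ne_of_ne]
end

section
/- Let Γ be a metrically homogeneous graph of generic type and let σ be a non-trivial permutation of the set of distances of Γ which maps Γ to another metrically homogeneous graph. Then the diameter δ of Γ is finite, and σ(1) ∈ {2, δ−1, δ}. -/
open SimpleGraph

/-!
Every triangle `(i, j, i + j)` on a geodesic of `Γ` is sent by `σ` to a metric triangle of `Γ^σ`,
and symmetrically for `σ⁻¹`, so both respect the triangle inequality on such triples. If `Γ` has
infinite diameter, subadditivity gives `σ (k · σ⁻¹ 1) ≤ k`; counting forces `σ⁻¹ 1 = 1`, and then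
`σ = id`. If the diameter `δ` is finite, genericity yields triangles `(2, i, i)` for all `i < δ`,
hence `σ 2 ≤ 2 σ i`; with `i = σ⁻¹ 1` this gives `σ 2 ≤ 2` unless `σ⁻¹ 1 = δ`. In each of the
cases `σ⁻¹ 1 = δ`, `σ 2 = 1`, `σ 2 = 2`, the triangle inequalities for `σ⁻¹` around `σ 1` leave
too few values for `3 ≤ σ 1 ≤ δ - 2`, while `σ 1 = 1` would again force `σ = id`.
-/

def TriangleIneq (a b c : ℕ) : Prop := a ≤ b + c ∧ b ≤ a + c ∧ c ≤ a + b

section GraphMetric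

variable {V : Type*} {G H : SimpleGraph V}

lemma SimpleGraph.Connected.exists_dist_eq_dist_eq_sub (hG : G.Connected) {x y : V} {k : ℕ}
    (hk : k ≤ G.dist x y) : ∃ z, G.dist x z = k ∧ G.dist z y = G.dist x y - k := by
  obtain ⟨p, hp⟩ := hG.exists_walk_length_eq_dist x y
  have h₁ : G.dist x (p.getVert k) ≤ k := (dist_le (p.take k)).trans (by simp)
  have h₂ : G.dist (p.getVert k) y ≤ G.dist x y - k := (dist_le (p.drop k)).trans (by simp [hp])
  have := hG.dist_triangle (u := x) (v := p.getVert k) (w := y)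
  exact ⟨p.getVert k, by omega, by omega⟩

lemma SimpleGraph.Connected.mem_distSet_of_le (hG : G.Connected) {m n : ℕ} (hn : n ∈ DistSet G)
    (hm : 0 < m) (hmn : m ≤ n) : m ∈ DistSet G := by
  obtain ⟨-, x, y, rfl⟩ := hn
  obtain ⟨z, hz, -⟩ := hG.exists_dist_eq_dist_eq_sub hmn
  exact ⟨hm, x, z, hz⟩

lemma SimpleGraph.Connected.mem_distSet_of_ediam_eq_top (hG : G.Connected) (h : G.ediam = ⊤)
    {n : ℕ} (hn : 0 < n) : n ∈ DistSet G := by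
  obtain ⟨x, y, hxy⟩ := ediam_eq_top.mp h n (ENat.natCast_lt_top n)
  rw [← (hG x y).coe_dist_eq_edist, Nat.cast_lt] at hxy
  exact hG.mem_distSet_of_le ⟨by omega, x, y, rfl⟩ hn hxy.le

lemma SimpleGraph.Connected.hasDiameter_diam (hG : G.Connected) (h : G.ediam ≠ ⊤) :
    HasDiameter G G.diam :=
  have := hG.nonempty
  ⟨fun _ _ => dist_le_diam h, exists_dist_eq_diam⟩

lemma SimpleGraph.Connected.distSet_eq_Icc (hG : G.Connected) {δ : ℕ} (hδ : HasDiameter G δ) :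
    DistSet G = Set.Icc 1 δ := by
  ext n
  constructor
  · rintro ⟨hn, x, y, rfl⟩
    exact ⟨hn, hδ.1 x y⟩
  · rintro ⟨h1, h2⟩
    obtain ⟨x, y, hxy⟩ := hδ.2
    exact hG.mem_distSet_of_le ⟨by omega, x, y, hxy⟩ h1 h2

lemma SimpleGraph.Connected.realizesTriangle_add (hG : G.Connected) {i j : ℕ}
    (hij : i + j ∈ DistSet G) : RealizesTriangle G i j (i + j) := by
  obtain ⟨-, x, y, hxy⟩ := hij
  obtain ⟨z, hxz, hzy⟩ := hG.exists_dist_eq_dist_eq_sub (x := x) (y := y) (k := i) (by omega)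
  exact ⟨x, z, y, hxz, by omega, hxy⟩

lemma SimpleGraph.Connected.triangleIneq (hG : G.Connected) {a b c : ℕ}
    (h : RealizesTriangle G a b c) : TriangleIneq a b c := by
  obtain ⟨x, y, z, rfl, rfl, rfl⟩ := h
  refine ⟨?_, ?_, hG.dist_triangle⟩
  · calc G.dist x y ≤ G.dist x z + G.dist z y := hG.dist_triangle
      _ = G.dist y z + G.dist x z := by rw [dist_comm (u := z), add_comm]
  · calc G.dist y z ≤ G.dist y x + G.dist x z := hG.dist_triangle
      _ = G.dist x y + G.dist x z := by rw [dist_comm]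

lemma GenericType.realizesTriangle_two (hG : G.Connected) (hgen : GenericType G) {i : ℕ}
    (hi : 0 < i) (hmem : i + 1 ∈ DistSet G) : RealizesTriangle G 2 i i := by
  obtain ⟨-, x, y, hxy⟩ := hmem
  obtain ⟨m, hxm, hmy⟩ := hG.exists_dist_eq_dist_eq_sub (x := x) (y := y) (k := i - 1) (by omega)
  obtain ⟨hinf, hindep⟩ := hgen.1 m y (by omega)
  obtain ⟨z, hz, z', hz', hzz'⟩ := hinf.nontrivial
  have dist_common : ∀ w, G.Adj m w ∧ G.Adj y w → G.dist w x = i := fun w ⟨hmw, hyw⟩ => by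
    have := hG.dist_triangle (u := x) (v := m) (w := w)
    have := hG.dist_triangle (u := x) (v := w) (w := y)
    have : G.dist m w = 1 := dist_eq_one_iff_adj.mpr hmw
    have : G.dist w y = 1 := dist_eq_one_iff_adj.mpr hyw.symm
    rw [SimpleGraph.dist_comm]
    omega
  have hzz'2 : G.dist z z' = 2 := by
    have := hG.dist_triangle (u := z) (v := m) (w := z')
    have : G.dist z m = 1 := dist_eq_one_iff_adj.mpr hz.1.symm
    have : G.dist m z' = 1 := dist_eq_one_iff_adj.mpr hz'.1
    have := hG.one_lt_dist_of_ne_of_not_adj hzz' (hindep z z' hz hz')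
    omega
  exact ⟨z, z', x, hzz'2, dist_common z' hz', dist_common z hz⟩

lemma RealizesTriangle.twist {f : ℕ → ℕ} (htw : ∀ x y : V, x ≠ y → H.dist x y = f (G.dist x y))
    {a b c : ℕ} (ha : 0 < a) (hb : 0 < b) (hc : 0 < c) (h : RealizesTriangle G a b c) :
    RealizesTriangle H (f a) (f b) (f c) := by
  obtain ⟨x, y, z, rfl, rfl, rfl⟩ := h
  have ne_of_pos {u v : V} (h : 0 < G.dist u v) : u ≠ v :=
    (dist_ne_zero_iff_ne_and_reachable.mp h.ne').1
  exact ⟨x, y, z, htw _ _ (ne_of_pos ha), htw _ _ (ne_of_pos hb), htw _ _ (ne_of_pos hc)⟩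

lemma dist_eq_symm_apply_of_twist {σ : Equiv.Perm ℕ}
    (htw : ∀ x y : V, x ≠ y → H.dist x y = σ (G.dist x y)) :
    ∀ x y : V, x ≠ y → G.dist x y = σ.symm (H.dist x y) := fun x y h => by
  rw [htw x y h, Equiv.symm_apply_apply]

lemma distSet_eq_of_twist (hG : G.Connected) {σ : Equiv.Perm ℕ}
    (htw : ∀ x y : V, x ≠ y → H.dist x y = σ (G.dist x y))
    (hmaps : ∀ n ∈ DistSet G, σ n ∈ DistSet G) (hmaps' : ∀ n ∈ DistSet G, σ.symm n ∈ DistSet G) :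
    DistSet H = DistSet G := by
  ext n
  constructor
  · rintro ⟨hn, x, y, rfl⟩
    have hxy : x ≠ y := by
      rintro rfl
      simp at hn
    rw [htw x y hxy]
    exact hmaps _ ⟨hG.pos_dist_of_ne hxy, x, y, rfl⟩
  · intro hn
    obtain ⟨hpos, x, y, hxy⟩ := hmaps' n hn
    have hne : x ≠ y := (dist_ne_zero_iff_ne_and_reachable.mp (hxy ▸ hpos.ne')).1
    exact ⟨hn.1, x, y, by rw [htw x y hne, hxy, Equiv.apply_symm_apply]⟩

end GraphMetric

lemma apply_mul_le_of_subadditive {f : ℕ → ℕ} {N a : ℕ}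
    (hsub : ∀ i j, 0 < i → 0 < j → i + j ≤ N → f (i + j) ≤ f i + f j) (ha : 0 < a) :
    ∀ k, 0 < k → k * a ≤ N → f (k * a) ≤ k * f a := by
  intro k hk hkN
  induction k with
  | zero => omega
  | succ k ih =>
    rcases Nat.eq_zero_or_pos k with rfl | hk
    · simp
    have hka : 0 < k * a := Nat.mul_pos hk ha
    calc f ((k + 1) * a) = f (k * a + a) := by rw [Nat.succ_mul]
      _ ≤ f (k * a) + f a := hsub _ _ hka ha (by rwa [← Nat.succ_mul])
      _ ≤ k * f a + f a := by gcongr; exact ih hk (by nlinarith)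
      _ = (k + 1) * f a := by rw [Nat.succ_mul]

lemma eq_self_of_apply_le {f : ℕ → ℕ} (hf : Function.Injective f) {N : ℕ}
    (h : ∀ k, 0 < k → k ≤ N → 0 < f k ∧ f k ≤ k) : ∀ k, 0 < k → k ≤ N → f k = k := by
  intro k
  induction k using Nat.strong_induction_on with
  | _ k ih =>
    intro hk hkN
    obtain ⟨hpos, hle⟩ := h k hk hkN
    by_contra hne
    exact hne (hf (ih (f k) (by omega) hpos (by omega)))

lemma eq_self_of_subadditive_of_apply_one {f : ℕ → ℕ} (hf : Function.Injective f) {N : ℕ}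
    (hpos : ∀ k, 0 < k → k ≤ N → 0 < f k)
    (hsub : ∀ i j, 0 < i → 0 < j → i + j ≤ N → f (i + j) ≤ f i + f j) (h1 : f 1 = 1) :
    ∀ k, 0 < k → k ≤ N → f k = k :=
  eq_self_of_apply_le hf fun k hk hkN =>
    ⟨hpos k hk hkN, by simpa [h1] using apply_mul_le_of_subadditive hsub one_pos k hk (by simpa)⟩

theorem Equiv.Perm.eq_self_of_subadditive (σ : Equiv.Perm ℕ) (hpos : ∀ n, 0 < n → 0 < σ n)
    (hsub : ∀ i j, 0 < i → 0 < j → σ (i + j) ≤ σ i + σ j) : ∀ n, 0 < n → σ n = n := by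
  set a := σ.symm 1
  have hσa : σ a = 1 := σ.apply_symm_apply 1
  have hσ0 : σ 0 = 0 := by
    by_contra h
    have := hpos (σ.symm 0) (Nat.pos_of_ne_zero fun h' => h (σ.symm_apply_eq.mp h').symm)
    simp at this
  have ha : 0 < a := Nat.pos_of_ne_zero fun h => by simp [h, hσ0] at hσa
  have hka : ∀ k, 0 < k → σ (k * a) ≤ k := fun k hk => by
    simpa [hσa] using apply_mul_le_of_subadditive (N := k * a)
      (fun i j hi hj _ => hsub i j hi hj) ha k hk le_rfl
  -- `k ↦ σ (k * a)` injects `[1, σ 1]` into itself, so it hits `σ 1`.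
  have ha1 : a = 1 := by
    obtain ⟨k, hk, hσk⟩ := Finset.surj_on_of_inj_on_of_card_le (s := Finset.Icc 1 (σ 1))
      (t := Finset.Icc 1 (σ 1)) (fun k _ => σ (k * a))
      (fun k hk => by
        rw [Finset.mem_Icc] at hk ⊢
        exact ⟨hpos _ (Nat.mul_pos (by omega) ha), (hka k (by omega)).trans hk.2⟩)
      (fun k₁ k₂ _ _ h => Nat.eq_of_mul_eq_mul_right ha (σ.injective h)) le_rfl (σ 1)
      (Finset.mem_Icc.mpr ⟨hpos 1 one_pos, le_rfl⟩)
    exact Nat.eq_one_of_mul_eq_one_left (σ.injective hσk).symm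
  intro n hn
  exact eq_self_of_subadditive_of_apply_one σ.injective (fun k hk _ => hpos k hk)
    (fun i j hi hj _ => hsub i j hi hj) (by rwa [ha1] at hσa) n hn le_rfl

structure PreservesTriangles (f : ℕ → ℕ) (δ : ℕ) : Prop where
  mapsTo : ∀ n, 0 < n ∧ n ≤ δ → 0 < f n ∧ f n ≤ δ
  triangleIneq : ∀ i j k, 0 < i ∧ 0 < j ∧ i + j = k ∧ k ≤ δ → TriangleIneq (f i) (f j) (f k)

lemma preservesTriangles_of_twist {V : Type*} {G H : SimpleGraph V} {f : ℕ → ℕ} {δ : ℕ}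
    (hG : G.Connected) (hH : H.Connected) (htw : ∀ x y : V, x ≠ y → H.dist x y = f (G.dist x y))
    (hD : DistSet G = Set.Icc 1 δ) (hmaps : ∀ n ∈ DistSet G, f n ∈ DistSet G) :
    PreservesTriangles f δ where
  mapsTo n hn := by
    have := hmaps n (hD ▸ hn)
    rwa [hD] at this
  triangleIneq := by
    rintro i j k ⟨hi, hj, rfl, hk⟩
    exact hH.triangleIneq ((hG.realizesTriangle_add (hD ▸ ⟨by omega, hk⟩)).twist htw hi hj
      (by omega))

namespace PreservesTriangles

variable {σ : Equiv.Perm ℕ} {δ : ℕ}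

lemma subadditive (h : PreservesTriangles σ δ) :
    ∀ i j, 0 < i → 0 < j → i + j ≤ δ → σ (i + j) ≤ σ i + σ j :=
  fun i j hi hj hij => (h.triangleIneq i j (i + j) ⟨hi, hj, rfl, hij⟩).2.2

lemma eq_self_of_apply_one (h : PreservesTriangles σ δ) (h1 : σ 1 = 1) :
    ∀ n, 0 < n → n ≤ δ → σ n = n :=
  eq_self_of_subadditive_of_apply_one σ.injective (fun k hk hkδ => (h.mapsTo k ⟨hk, hkδ⟩).1)
    h.subadditive h1

lemma false_of_symm_apply_one_eq (hτ : PreservesTriangles σ.symm δ) (ha : σ.symm 1 = δ)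
    (hb₁ : 3 ≤ σ 1) (hb₂ : σ 1 + 2 ≤ δ) : False := by
  set b := σ 1
  have hτb : σ.symm b = 1 := σ.symm_apply_apply 1
  obtain ⟨h₁, -, -⟩ := hτ.triangleIneq 1 (b - 1) b (by omega)
  obtain ⟨h₂, -, -⟩ := hτ.triangleIneq 1 b (b + 1) (by omega)
  have := (hτ.mapsTo (b - 1) (by omega)).2
  have := (hτ.mapsTo (b + 1) (by omega)).2
  have := σ.symm.injective.ne (show b - 1 ≠ b + 1 by omega)
  have := σ.symm.injective.ne (show b - 1 ≠ 1 by omega)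
  have := σ.symm.injective.ne (show b + 1 ≠ 1 by omega)
  omega

lemma false_of_apply_two_eq_one (hτ : PreservesTriangles σ.symm δ) (h2 : σ 2 = 1)
    (hb₁ : 3 ≤ σ 1) (hb₂ : σ 1 + 1 ≤ δ) : False := by
  set b := σ 1
  have hτb : σ.symm b = 1 := σ.symm_apply_apply 1
  have hτ1 : σ.symm 1 = 2 := σ.symm_apply_eq.mpr h2.symm
  obtain ⟨-, h₁, -⟩ := hτ.triangleIneq 1 (b - 1) b (by omega)
  obtain ⟨-, -, h₂⟩ := hτ.triangleIneq 1 b (b + 1) (by omega)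
  have := (hτ.mapsTo (b - 1) (by omega)).1
  have := (hτ.mapsTo (b + 1) (by omega)).1
  have := σ.symm.injective.ne (show b - 1 ≠ b + 1 by omega)
  have := σ.symm.injective.ne (show b - 1 ≠ 1 by omega)
  have := σ.symm.injective.ne (show b + 1 ≠ 1 by omega)
  have := σ.symm.injective.ne (show b - 1 ≠ b by omega)
  have := σ.symm.injective.ne (show b + 1 ≠ b by omega)
  omega

lemma false_of_apply_two_eq_two (hσ : PreservesTriangles σ δ) (hτ : PreservesTriangles σ.symm δ)
    (h2 : σ 2 = 2) (hb₁ : 3 ≤ σ 1) (hb₂ : σ 1 + 2 ≤ δ) : False := by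
  set b := σ 1
  have hτb : σ.symm b = 1 := σ.symm_apply_apply 1
  have hτ2 : σ.symm 2 = 2 := σ.symm_apply_eq.mpr h2.symm
  have hτb2 : σ.symm (b + 2) = 3 := by
    obtain ⟨-, -, h⟩ := hτ.triangleIneq 2 b (b + 2) (by omega)
    have := (hτ.mapsTo (b + 2) (by omega)).1
    have := σ.symm.injective.ne (show b + 2 ≠ b by omega)
    have := σ.symm.injective.ne (show b + 2 ≠ 2 by omega)
    omega
  have hb4 : b = 4 := by
    obtain ⟨-, h, -⟩ := hτ.triangleIneq 2 (b - 2) b (by omega)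
    have := (hτ.mapsTo (b - 2) (by omega)).1
    have := σ.symm.injective.ne (show b - 2 ≠ b by omega)
    have := σ.symm.injective.ne (show b - 2 ≠ b + 2 by omega)
    by_contra hb4
    have := σ.symm.injective.ne (show b - 2 ≠ 2 by omega)
    omega
  rw [hb4] at hτb2 hb₂
  have hσ3 : σ 3 = 6 := (σ.symm_apply_eq.mp hτb2).symm
  have hσ4 : σ 4 = 3 := by
    obtain ⟨-, -, h⟩ := hσ.triangleIneq 2 2 4 (by omega)
    obtain ⟨-, h', -⟩ := hσ.triangleIneq 1 3 4 (by omega)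
    have := σ.injective.ne (show 4 ≠ 2 by omega)
    have := σ.injective.ne (show 4 ≠ 1 by omega)
    omega
  have hσ5 : σ 5 = 1 := by
    have hτ3 : σ.symm 3 = 4 := σ.symm_apply_eq.mpr hσ4.symm
    have hτ4 : σ.symm 4 = 1 := hb4 ▸ hτb
    obtain ⟨h, h', -⟩ := hτ.triangleIneq 1 3 4 (by omega)
    have : σ.symm 1 ≠ 3 := fun h => by rw [σ.symm_apply_eq, hσ3] at h; omega
    have : σ.symm 1 ≠ 4 := fun h => by rw [σ.symm_apply_eq, hσ4] at h; omega
    have : σ.symm 1 = 5 := by omega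
    exact (σ.symm_apply_eq.mp this).symm
  obtain ⟨-, h, -⟩ := hσ.triangleIneq 2 3 5 (by omega)
  omega

theorem apply_one_eq_two_or (hσ : PreservesTriangles σ δ) (hτ : PreservesTriangles σ.symm δ)
    (hgen : ∀ i, 0 < i → i < δ → σ 2 ≤ σ i + σ i) (hne : ∃ n, 0 < n ∧ n ≤ δ ∧ σ n ≠ n) :
    σ 1 = 2 ∨ σ 1 = δ - 1 ∨ σ 1 = δ := by
  obtain ⟨n, hn, hnδ, hσn⟩ := hne
  have h1 : σ 1 ≠ 1 := fun h1 => hσn (hσ.eq_self_of_apply_one h1 n hn hnδ)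
  have := hσ.mapsTo 1 ⟨one_pos, by omega⟩
  by_contra! hb
  by_cases ha : σ.symm 1 = δ
  · exact hτ.false_of_symm_apply_one_eq ha (by omega) (by omega)
  have ha' := hτ.mapsTo 1 ⟨one_pos, by omega⟩
  have h2 : σ 2 ≤ 2 := by simpa using hgen (σ.symm 1) ha'.1 (by omega)
  have := σ.injective.ne (show 2 ≠ 1 by omega)
  obtain h2 | h2 : σ 2 = 1 ∨ σ 2 = 2 := by
    have := hσ.mapsTo 2 ⟨two_pos, by omega⟩
    omega
  · exact hτ.false_of_apply_two_eq_one h2 (by omega) (by omega)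
  · exact hσ.false_of_apply_two_eq_two hτ h2 (by omega) (by omega)

end PreservesTriangles

/-- if `Γ` is of generic type and admits a non-trivial twist `σ`,
then the diameter `δ` is finite and `σ(1) ∈ {2, δ-1, δ}`. -/
theorem options_for_sigma_one {V : Type*} (G H : SimpleGraph V)
    (σ : Equiv.Perm ℕ)
    (hG : IsMetricallyHomogeneous G) (hgen : GenericType G)
    (hmaps : ∀ n ∈ DistSet G, σ n ∈ DistSet G)
    (hmaps' : ∀ n ∈ DistSet G, σ.symm n ∈ DistSet G)
    (hnontriv : ∃ n ∈ DistSet G, σ n ≠ n)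
    (hH : IsMetricallyHomogeneous H)
    (htw : ∀ x y : V, x ≠ y → H.dist x y = σ (G.dist x y)) :
    ∃ δ : ℕ, HasDiameter G δ ∧ (σ 1 = 2 ∨ σ 1 = δ - 1 ∨ σ 1 = δ) := by
  obtain ⟨hGc, -⟩ := hG
  obtain ⟨hHc, -⟩ := hH
  obtain ⟨n, hn, hσn⟩ := hnontriv
  have triangle {a b c : ℕ} (ha : 0 < a) (hb : 0 < b) (hc : 0 < c)
      (h : RealizesTriangle G a b c) : TriangleIneq (σ a) (σ b) (σ c) :=
    hHc.triangleIneq (h.twist htw ha hb hc)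
  by_cases hinf : G.ediam = ⊤
  · have hall {k : ℕ} (hk : 0 < k) : k ∈ DistSet G := hGc.mem_distSet_of_ediam_eq_top hinf hk
    refine absurd (σ.eq_self_of_subadditive (fun k hk => (hmaps k (hall hk)).1)
      (fun i j hi hj => ?_) n hn.1) hσn
    exact (triangle hi hj (by omega) (hGc.realizesTriangle_add (hall (by omega)))).2.2
  have hδ := hGc.hasDiameter_diam hinf
  have hIcc := hGc.distSet_eq_Icc hδ
  have hD := distSet_eq_of_twist hGc htw hmaps hmaps'
  refine ⟨G.diam, hδ, PreservesTriangles.apply_one_eq_two_or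
    (preservesTriangles_of_twist hGc hHc htw hIcc hmaps)
    (preservesTriangles_of_twist hHc hGc (dist_eq_symm_apply_of_twist htw) (hD.trans hIcc)
      (hD ▸ hmaps'))
    (fun i hi hiδ => ?_) ⟨n, by rw [hIcc] at hn; exact ⟨hn.1, hn.2, hσn⟩⟩⟩
  exact (triangle (by norm_num) hi hi
    (hgen.realizesTriangle_two hGc hi (hIcc ▸ ⟨by omega, hiδ⟩))).1
end

section
/- Let Γ be a metrically homogeneous graph of generic type with diameter δ and let σ be a permutation of {1,…,δ} which sends Γ to another metrically homogeneous graph and satisfies σ(1) = 2. Then either σ = ρ, or δ = 3 and σ is the transposition (1,2). -/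
/-!
Distances of `H` are `σ`-images of distances of `G` and conversely, so both `σ` and `σ⁻¹` send
the side lengths `(a, b, a + b)` of a geodesic triangle to a triple obeying the triangle
inequality. With `σ 1 = 2` this subadditivity gives `σ i ≤ 2 i` and `σ⁻¹ (2 k) ≤ k`, hence
`σ k = 2 k` whenever `2 k ≤ δ`. The odd distances are therefore the images of `(δ / 2, δ]`, and
since `σ⁻¹ 2 = 1` consecutive odd numbers have preimages at distance exactly `1`. An injective
walk with unit steps is monotone, so either `σ⁻¹ (2 j + 1) = δ - j`, which is `ρ`, or
`σ⁻¹ (2 j + 1) = δ / 2 + 1 + j`; in the latter case `σ (δ / 2 + 1) = 1`, and the triangle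
`(δ / 2, 1, δ / 2 + 1)` forces `δ ≤ 3`.
-/

open SimpleGraph

namespace SimpleGraph

variable {V : Type*} {G : SimpleGraph V}

theorem Reachable.exists_dist_eq_and_dist_eq_sub {x y : V} (hr : G.Reachable x y) {k : ℕ}
    (hk : k ≤ G.dist x y) : ∃ z, G.dist x z = k ∧ G.dist z y = G.dist x y - k := by
  obtain ⟨p, hp⟩ := hr.exists_walk_length_eq_dist
  have h₁ := dist_le (p.take k)
  have h₂ := dist_le (p.drop k)
  have h₃ := (p.take k).reachable.dist_triangle_left y
  simp only [Walk.take_length, Walk.drop_length] at h₁ h₂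
  exact ⟨p.getVert k, by omega, by omega⟩

end SimpleGraph

theorem HasDiameter.exists_dist_eq {V : Type*} {G : SimpleGraph V} {δ n : ℕ}
    (h : HasDiameter G δ) (hn₀ : 0 < n) (hn : n ≤ δ) : ∃ x y, G.dist x y = n := by
  obtain ⟨x, y, hxy⟩ := h.2
  obtain ⟨z, hz, -⟩ :=
    (Reachable.of_dist_ne_zero (by omega : G.dist x y ≠ 0)).exists_dist_eq_and_dist_eq_sub
      (k := n) (by omega)
  exact ⟨x, z, hz⟩

-- `(f a, f b, f (a + b))` obeys the triangle inequality; the third inequality is the second one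
-- with `a` and `b` swapped.
def PreservesTriangles_s7 (f : ℕ → ℕ) (δ : ℕ) : Prop :=
  ∀ a b, 0 < a → 0 < b → a + b ≤ δ → f (a + b) ≤ f a + f b ∧ f a ≤ f (a + b) + f b

theorem preservesTriangles_of_dist_eq {V : Type*} {G H : SimpleGraph V} (hH : H.Connected)
    {f : ℕ → ℕ} {δ : ℕ} (hreal : ∀ n, 0 < n → n ≤ δ → ∃ x y, G.dist x y = n)
    (hf : ∀ x y, x ≠ y → H.dist x y = f (G.dist x y)) : PreservesTriangles_s7 f δ := by
  intro a b ha hb hab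
  obtain ⟨x, y, hxy⟩ := hreal (a + b) (by omega) hab
  obtain ⟨z, hxz, hzy⟩ :=
    (Reachable.of_dist_ne_zero (by omega : G.dist x y ≠ 0)).exists_dist_eq_and_dist_eq_sub
      (k := a) (by omega)
  have ne_of_dist_ne_zero : ∀ {u v : V}, G.dist u v ≠ 0 → u ≠ v :=
    fun h => (dist_ne_zero_iff_ne_and_reachable.mp h).1
  have e₁ := hf x z (ne_of_dist_ne_zero (by omega))
  have e₂ := hf z y (ne_of_dist_ne_zero (by omega))
  have e₃ := hf x y (ne_of_dist_ne_zero (by omega))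
  have t₁ := hH.dist_triangle (u := x) (v := z) (w := y)
  have t₂ := hH.dist_triangle (u := x) (v := y) (w := z)
  rw [dist_comm (u := y)] at t₂
  rw [hxz] at e₁
  rw [hzy, hxy, Nat.add_sub_cancel_left] at e₂
  rw [hxy] at e₃
  omega

theorem PreservesTriangles_s7.le_mul {f : ℕ → ℕ} {δ a : ℕ} (hf : PreservesTriangles_s7 f δ)
    (ha : 0 < a) {k : ℕ} (hk : 0 < k) (hka : k * a ≤ δ) : f (k * a) ≤ k * f a := by
  induction k, hk using Nat.le_induction with
  | base => simp
  | succ k hk ih =>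
    have := (hf (k * a) a (by positivity) ha (by rwa [← Nat.succ_mul])).1
    rw [Nat.succ_mul, Nat.succ_mul]
    have := ih (le_trans (Nat.mul_le_mul_right a (Nat.le_succ k)) hka)
    omega

theorem eq_add_mul_or_eq_sub_mul_of_injOn {g : ℕ → ℤ} {c : ℤ} {n : ℕ}
    (hinj : Set.InjOn g (Set.Iio n)) (hstep : ∀ j, j + 1 < n → |g (j + 1) - g j| = c) :
    (∀ j < n, g j = g 0 + j * c) ∨ (∀ j < n, g j = g 0 - j * c) := by
  rcases lt_or_ge n 2 with hn | hn
  · left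
    intro j hj
    obtain rfl : j = 0 := by omega
    simp
  set s := g 1 - g 0
  have hsc : |s| = c := hstep 0 (by omega)
  -- two opposite steps in a row would revisit a value
  have hconst : ∀ j, j + 1 < n → g (j + 1) = g j + s := by
    intro j
    induction j with
    | zero => intro; ring
    | succ j ih =>
      intro hj
      have hprev := ih (by omega)
      have hrevisit : g (j + 2) ≠ g j := fun h => by
        have := hinj (Set.mem_Iio.mpr (by omega)) (Set.mem_Iio.mpr (by omega)) h
        omega
      rcases abs_eq_abs.mp ((hstep (j + 1) hj).trans hsc.symm) with h | h
      · linarith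
      · exact absurd (by linarith) hrevisit
  have harith : ∀ j < n, g j = g 0 + j * s := by
    intro j
    induction j with
    | zero => simp
    | succ j ih =>
      intro hj
      rw [hconst j hj, ih (by omega)]
      push_cast
      ring
  rcases (abs_eq (hsc ▸ abs_nonneg s)).mp hsc with h | h
  · exact .inl fun j hj => by rw [harith j hj, h]
  · exact .inr fun j hj => by rw [harith j hj, h]; ring

section OnePermutation

variable {σ : Equiv.Perm ℕ} {δ : ℕ}

theorem apply_eq_two_mul_of_preservesTriangles (hmaps : Set.MapsTo σ (Set.Icc 1 δ) (Set.Icc 1 δ))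
    (hσ : PreservesTriangles_s7 σ δ) (hσ' : PreservesTriangles_s7 σ.symm δ) (h1 : σ 1 = 2)
    {k : ℕ} (hk : 0 < k) (h2k : 2 * k ≤ δ) : σ k = 2 * k := by
  have h2 : σ.symm 2 = 1 := by rw [Equiv.symm_apply_eq, h1]
  obtain ⟨hi₁, hi₂⟩ := σ.perm_symm_mapsTo_of_mapsTo hmaps ⟨by omega, h2k⟩
  have hup : σ.symm (2 * k) ≤ k := by
    simpa [h2, mul_comm] using hσ'.le_mul two_pos hk (by omega)
  have hlow : 2 * k ≤ 2 * σ.symm (2 * k) := by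
    simpa [h1, mul_comm] using hσ.le_mul one_pos hi₁ (by simpa using hi₂)
  exact ((Equiv.symm_apply_eq σ).mp (le_antisymm hup (by omega))).symm

theorem symm_apply_odd_eq_sub_or_eq_add (hmaps : Set.MapsTo σ (Set.Icc 1 δ) (Set.Icc 1 δ))
    (hσ : PreservesTriangles_s7 σ δ) (hσ' : PreservesTriangles_s7 σ.symm δ) (h1 : σ 1 = 2) :
    (∀ j, 2 * j + 1 ≤ δ → σ.symm (2 * j + 1) = δ - j) ∨
    (∀ j, 2 * j + 1 ≤ δ → σ.symm (2 * j + 1) = δ / 2 + 1 + j) := by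
  obtain rfl | hδ := Nat.eq_zero_or_pos δ
  · exact .inl fun j hj => by omega
  have h2 : σ.symm 2 = 1 := by rw [Equiv.symm_apply_eq, h1]
  -- the even values `2, 4, …, 2 * (δ / 2)` are taken by `1, …, δ / 2`
  have hmem : ∀ j, 2 * j + 1 ≤ δ → δ / 2 < σ.symm (2 * j + 1) ∧ σ.symm (2 * j + 1) ≤ δ := by
    intro j hj
    obtain ⟨hi₁, hi₂⟩ := σ.perm_symm_mapsTo_of_mapsTo hmaps ⟨by omega, hj⟩
    refine ⟨?_, hi₂⟩
    by_contra! hle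
    have := apply_eq_two_mul_of_preservesTriangles hmaps hσ hσ' h1 hi₁ (by omega)
    rw [Equiv.apply_symm_apply] at this
    omega
  have hstep : ∀ j, j + 1 < δ - δ / 2 →
      |(σ.symm (2 * (j + 1) + 1) : ℤ) - σ.symm (2 * j + 1)| = 1 := by
    intro j hj
    have htri := hσ' (2 * j + 1) 2 (by omega) two_pos (by omega)
    have hne : σ.symm (2 * (j + 1) + 1) ≠ σ.symm (2 * j + 1) := fun h => by
      have := σ.symm.injective h
      omega
    rw [h2, show 2 * j + 1 + 2 = 2 * (j + 1) + 1 by ring] at htri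
    rw [abs_eq zero_le_one]
    omega
  have hinj : Set.InjOn (fun j : ℕ => ((σ.symm (2 * j + 1) : ℕ) : ℤ)) (Set.Iio (δ - δ / 2)) :=
    fun a _ b _ hab => by
      have : 2 * a + 1 = 2 * b + 1 := σ.symm.injective (Nat.cast_injective hab)
      omega
  have h₀ := hmem 0 (by omega)
  have hlast := hmem (δ - δ / 2 - 1) (by omega)
  rcases eq_add_mul_or_eq_sub_mul_of_injOn hinj hstep with h | h
  · have := h (δ - δ / 2 - 1) (by omega)
    exact .inr fun j hj => by have := h j (by omega); push_cast at *; omega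
  · have := h (δ - δ / 2 - 1) (by omega)
    exact .inl fun j hj => by have := h j (by omega); push_cast at *; omega

theorem eq_rhoFun_or_swap_of_preservesTriangles
    (hmaps : Set.MapsTo σ (Set.Icc 1 δ) (Set.Icc 1 δ))
    (hσ : PreservesTriangles_s7 σ δ) (hσ' : PreservesTriangles_s7 σ.symm δ) (h1 : σ 1 = 2) :
    (∀ i ∈ Finset.Icc 1 δ, σ i = rhoFun δ i) ∨ (δ = 3 ∧ σ 1 = 2 ∧ σ 2 = 1 ∧ σ 3 = 3) := by
  obtain rfl | hδ := Nat.eq_zero_or_pos δ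
  · exact .inl fun i hi => by simp at hi
  have hδ2 : 2 ≤ δ := h1 ▸ (hmaps ⟨le_rfl, hδ⟩).2
  have heven : ∀ k, 0 < k → 2 * k ≤ δ → σ k = 2 * k :=
    fun _ => apply_eq_two_mul_of_preservesTriangles hmaps hσ hσ' h1
  have apply_of_symm_apply : ∀ {n i}, σ.symm n = i → σ i = n := fun h => (σ.symm_apply_eq.mp h).symm
  rcases symm_apply_odd_eq_sub_or_eq_add hmaps hσ hσ' h1 with hodd | hodd
  · left
    intro i hi
    rw [Finset.mem_Icc] at hi
    unfold rhoFun
    split_ifs with h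
    · exact heven i (by omega) h
    · exact apply_of_symm_apply (by rw [hodd _ (by omega), Nat.sub_sub_self hi.2])
  · have hmid : σ (δ / 2 + 1) = 1 := apply_of_symm_apply (hodd 0 (by omega))
    have hδ3 : δ ≤ 3 := by
      have := (hσ (δ / 2) 1 (by omega) one_pos (by omega)).2
      rw [heven (δ / 2) (by omega) (by omega), hmid, h1] at this
      omega
    interval_cases δ
    · left
      intro i hi
      obtain ⟨hi₁, hi₂⟩ := Finset.mem_Icc.mp hi
      interval_cases i
      · exact h1
      · exact hmid
    · exact .inr ⟨rfl, h1, hmid, apply_of_symm_apply (hodd 1 le_rfl)⟩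

end OnePermutation

theorem sigma_one_eq_two_implies_rho_general {V : Type*} (G H : SimpleGraph V) (δ : ℕ)
    (σ : Equiv.Perm ℕ)
    (hG : IsMetricallyHomogeneous G)
    (hdiam : HasDiameter G δ)
    (hperm : ∀ i ∈ Finset.Icc 1 δ, σ i ∈ Finset.Icc 1 δ)
    (hH : IsMetricallyHomogeneous H)
    (htw : ∀ x y : V, x ≠ y → H.dist x y = σ (G.dist x y))
    (h1 : σ 1 = 2) :
    (∀ i ∈ Finset.Icc 1 δ, σ i = rhoFun δ i) ∨
    (δ = 3 ∧ σ 1 = 2 ∧ σ 2 = 1 ∧ σ 3 = 3) := by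
  have hmaps : Set.MapsTo σ (Set.Icc 1 δ) (Set.Icc 1 δ) := fun i hi => by
    simpa using hperm i (by simpa using hi)
  have hrealG : ∀ n, 0 < n → n ≤ δ → ∃ x y, G.dist x y = n := fun _ => hdiam.exists_dist_eq
  have htw' : ∀ x y : V, x ≠ y → G.dist x y = σ.symm (H.dist x y) := fun x y hxy => by
    rw [htw x y hxy, Equiv.symm_apply_apply]
  have hrealH : ∀ n, 0 < n → n ≤ δ → ∃ x y, H.dist x y = n := by
    intro n hn₀ hn
    obtain ⟨hi₁, hi₂⟩ := Set.mem_Icc.mp (σ.perm_symm_mapsTo_of_mapsTo hmaps ⟨hn₀, hn⟩)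
    obtain ⟨x, y, hxy⟩ := hrealG _ hi₁ hi₂
    refine ⟨x, y, ?_⟩
    have hne : x ≠ y := (dist_ne_zero_iff_ne_and_reachable (G := G).mp (by omega)).1
    rw [htw x y hne, hxy, Equiv.apply_symm_apply]
  exact eq_rhoFun_or_swap_of_preservesTriangles hmaps
    (preservesTriangles_of_dist_eq hH.1 hrealG htw)
    (preservesTriangles_of_dist_eq hG.1 hrealH htw') h1

/-- if `σ(1) = 2` then `σ = ρ`, or `δ = 3` and `σ` is the
transposition `(1,2)`. -/
theorem sigma_one_eq_two_implies_rho {V : Type*} (G H : SimpleGraph V) (δ : ℕ)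
    (σ : Equiv.Perm ℕ)
    (hG : IsMetricallyHomogeneous G) (hgen : GenericType G)
    (hdiam : HasDiameter G δ)
    (hperm : ∀ i ∈ Finset.Icc 1 δ, σ i ∈ Finset.Icc 1 δ)
    (hH : IsMetricallyHomogeneous H)
    (htw : ∀ x y : V, x ≠ y → H.dist x y = σ (G.dist x y))
    (h1 : σ 1 = 2) :
    (∀ i ∈ Finset.Icc 1 δ, σ i = rhoFun δ i) ∨
    (δ = 3 ∧ σ 1 = 2 ∧ σ 2 = 1 ∧ σ 3 = 3) :=
  sigma_one_eq_two_implies_rho_general G H δ σ hG hdiam hperm hH htw h1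
end

section
/- Let Γ be a metrically homogeneous graph of generic type with finite diameter δ ≥ 3 such that Γ^ρ is also a metrically homogeneous graph. Then the numerical parameters of Γ are K₁ = 1, K₂ = δ, C = 2δ+2, and C' = 2δ+3. -/
open SimpleGraph

/-!
The twist exchanges the roles of the extreme distances: `ρ δ = 1` and `ρ 1 = 2`, so pairs at
distance `δ` in `Γ` are the edges of `Γ^ρ`, and every edge of `Γ` has a common `Γ^ρ`-neighbour,
i.e. lies in a triangle of type `(1, δ, δ)`. The triangle inequality of `Γ^ρ`, read through `ρ`,
rules out a triangle of type `(δ, δ, δ)`; it follows that two vertices at distance `δ` from a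
common vertex are adjacent. Homogeneity lets one push any side of a triangle out to length `δ`
(one step at a time, along an edge) without decreasing the perimeter; doing so to two sides of a
triangle of perimeter `≥ 2δ + 2` produces a triangle of type `(δ, δ, m)` with `m ≥ 2`, which the
twisted triangle inequality forces to be `(δ, δ, δ)`. Finally, each neighbour of `x` is at
distance `δ` from some vertex of the `δ`-sphere around `x`, and `x` has infinitely many
neighbours, so some `δ`-sphere is infinite; any three of its points form a triangle `(1, 1, 1)`.
-/

section RhoArithmetic

variable {δ i : ℕ}

theorem rhoFun_zero : rhoFun δ 0 = 0 := by
  simp [rhoFun]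

theorem rhoFun_one (hδ : 2 ≤ δ) : rhoFun δ 1 = 2 := by
  unfold rhoFun; split_ifs <;> omega

theorem rhoFun_self (hδ : 1 ≤ δ) : rhoFun δ δ = 1 := by
  unfold rhoFun; split_ifs <;> omega

theorem rhoFun_sub_one (hδ : 3 ≤ δ) : rhoFun δ (δ - 1) = 3 := by
  unfold rhoFun; split_ifs <;> omega

theorem eq_of_rhoFun_eq_one (hi : i ≤ δ) (h : rhoFun δ i = 1) : i = δ := by
  unfold rhoFun at h; split_ifs at h <;> omega

theorem eq_one_of_rhoFun_eq_two (h : rhoFun δ i = 2) : i = 1 := by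
  unfold rhoFun at h; split_ifs at h <;> omega

theorem le_one_or_eq_of_rhoFun_le_two (hi : i ≤ δ) (h : rhoFun δ i ≤ 2) : i ≤ 1 ∨ i = δ := by
  unfold rhoFun at h; split_ifs at h <;> omega

end RhoArithmetic

section Homogeneous

variable {V : Type*} {G : SimpleGraph V} {δ : ℕ}

theorem SimpleGraph.Connected.exists_dist_eq_dist_sub (hG : G.Connected) {x y : V} {r : ℕ}
    (hr : r ≤ G.dist x y) : ∃ w, G.dist x w = r ∧ G.dist w y = G.dist x y - r := by
  obtain ⟨p, hp⟩ := hG.exists_walk_length_eq_dist x y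
  have hx := dist_le (p.take r)
  have hy := dist_le (p.drop r)
  have := hG.dist_triangle (u := x) (v := p.getVert r) (w := y)
  simp only [Walk.take_length, Walk.drop_length] at hx hy
  exact ⟨p.getVert r, by omega, by omega⟩

theorem HasDiameter.exists_dist_eq_s12 (hG : G.Connected) (hdiam : HasDiameter G δ) {r : ℕ}
    (hr : r ≤ δ) : ∃ x y : V, G.dist x y = r := by
  obtain ⟨x, y, hxy⟩ := hdiam.2
  obtain ⟨w, hw, -⟩ := hG.exists_dist_eq_dist_sub (x := x) (y := y) (r := r) (by omega)
  exact ⟨x, w, hw⟩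

theorem IsMetricallyHomogeneous.exists_isometry_map_pair (hG : IsMetricallyHomogeneous G)
    {y z y' z' : V} (h : G.dist y' z' = G.dist y z) :
    ∃ g : V ≃ V, (∀ a b, G.dist (g a) (g b) = G.dist a b) ∧ g y' = y ∧ g z' = z := by
  classical
  let f : V → V := fun w => if w = y' then y else z
  have hf : ∀ a ∈ ({y', z'} : Finset V), ∀ b ∈ ({y', z'} : Finset V),
      G.dist (f a) (f b) = G.dist a b := by
    simp only [Finset.mem_insert, Finset.mem_singleton]
    rintro a (rfl | rfl) b (rfl | rfl) <;> simp only [f] <;> split_ifs <;>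
      simp_all [dist_comm]
  obtain ⟨g, hg, hgf⟩ := hG.2 {y', z'} f hf
  refine ⟨g, hg, by simpa [f] using hgf y' (by simp), ?_⟩
  rw [hgf z' (by simp)]
  simp only [f]
  split_ifs with hz
  · subst hz
    exact hG.1.dist_eq_zero_iff.mp (by simpa using h.symm)
  · rfl

theorem IsMetricallyHomogeneous.exists_dist_eq_dist (hG : IsMetricallyHomogeneous G)
    {x' y' z' y z : V} (h : G.dist y' z' = G.dist y z) :
    ∃ x, G.dist x y = G.dist x' y' ∧ G.dist x z = G.dist x' z' := by
  obtain ⟨g, hg, rfl, rfl⟩ := hG.exists_isometry_map_pair h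
  exact ⟨g x', hg _ _, hg _ _⟩

theorem IsMetricallyHomogeneous.exists_dist_eq_one_dist_eq_succ (hG : IsMetricallyHomogeneous G)
    (hdiam : HasDiameter G δ) {y z : V} (h : G.dist y z < δ) :
    ∃ y₁, G.dist y₁ y = 1 ∧ G.dist y₁ z = G.dist y z + 1 := by
  obtain ⟨a, b, hab⟩ := hdiam.exists_dist_eq_s12 hG.1 (Nat.succ_le_of_lt h)
  obtain ⟨a₁, ha₁, ha₁b⟩ := hG.1.exists_dist_eq_dist_sub (x := a) (y := b) (r := 1) (by omega)
  obtain ⟨y₁, h₁, h₂⟩ := hG.exists_dist_eq_dist (x' := a) (h := (show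
    G.dist a₁ b = G.dist y z by omega))
  exact ⟨y₁, h₁.trans ha₁, h₂.trans hab⟩

theorem IsMetricallyHomogeneous.exists_dist_eq_diam_and_add_le (hG : IsMetricallyHomogeneous G)
    (hdiam : HasDiameter G δ) (x y z : V) :
    ∃ y', G.dist y' z = δ ∧ G.dist x y + G.dist y z ≤ G.dist x y' + G.dist y' z := by
  suffices ∀ n y, δ - G.dist y z ≤ n →
      ∃ y', G.dist y' z = δ ∧ G.dist x y + G.dist y z ≤ G.dist x y' + G.dist y' z from
    this _ y le_rfl
  intro n
  induction n with
  | zero =>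
    intro y hy
    exact ⟨y, le_antisymm (hdiam.1 y z) (by omega), le_rfl⟩
  | succ n ih =>
    intro y hy
    rcases (hdiam.1 y z).lt_or_eq with hlt | heq
    · obtain ⟨y₁, hy₁, hy₁z⟩ := hG.exists_dist_eq_one_dist_eq_succ hdiam hlt
      obtain ⟨y', hy', hle⟩ := ih y₁ (by omega)
      have := hG.1.dist_triangle (u := x) (v := y₁) (w := y)
      exact ⟨y', hy', by omega⟩
    · exact ⟨y, heq, le_rfl⟩

end Homogeneous

/-- `H` is `G^ρ`; since `ρ 0 = 0`, the relation between the two metrics holds on the diagonal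
as well. -/
structure IsRhoTwist {V : Type*} (G H : SimpleGraph V) (δ : ℕ) : Prop where
  connected : H.Connected
  dist_eq : ∀ x y, H.dist x y = rhoFun δ (G.dist x y)

namespace IsRhoTwist

variable {V : Type*} {G H : SimpleGraph V} {δ : ℕ}

theorem rhoFun_dist_le (hH : IsRhoTwist G H δ) (x y z : V) :
    rhoFun δ (G.dist x z) ≤ rhoFun δ (G.dist x y) + rhoFun δ (G.dist y z) := by
  simpa only [hH.dist_eq] using hH.connected.dist_triangle (u := x) (v := y) (w := z)

theorem exists_dist_eq_diam_of_dist_eq_one (hH : IsRhoTwist G H δ) (hdiam : HasDiameter G δ)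
    (hδ : 2 ≤ δ) {v y : V} (h : G.dist v y = 1) : ∃ u, G.dist u v = δ ∧ G.dist u y = δ := by
  have hH2 : H.dist v y = 2 := by rw [hH.dist_eq, h, rhoFun_one hδ]
  obtain ⟨u, hvu, huy⟩ :=
    hH.connected.exists_dist_eq_dist_sub (x := v) (y := y) (r := 1) (by omega)
  rw [hH2, hH.dist_eq] at huy
  rw [hH.dist_eq] at hvu
  exact ⟨u, dist_comm.trans (eq_of_rhoFun_eq_one (hdiam.1 v u) hvu),
    eq_of_rhoFun_eq_one (hdiam.1 u y) huy⟩

theorem dist_eq_one_of_dist_eq_diam_sub_one (hH : IsRhoTwist G H δ) (hδ : 3 ≤ δ)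
    {u v w y : V} (huy : G.dist u y = δ) (hyw : G.dist y w = δ) (huv : G.dist u v = δ)
    (hvw : G.dist v w = δ - 1) : G.dist u w = 1 := by
  have hle := hH.rhoFun_dist_le u y w
  have hge := hH.rhoFun_dist_le v u w
  rw [huy, hyw, rhoFun_self (by omega)] at hle
  rw [dist_comm (u := v) (v := u), huv, hvw, rhoFun_self (by omega), rhoFun_sub_one hδ] at hge
  exact eq_one_of_rhoFun_eq_two (δ := δ) (by omega)

theorem not_realizesTriangle_diam (hH : IsRhoTwist G H δ) (hG : G.Connected)
    (hdiam : HasDiameter G δ) (hδ : 3 ≤ δ) : ¬ RealizesTriangle G δ δ δ := by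
  rintro ⟨x, y, z, hxy, hyz, hxz⟩
  obtain ⟨v, hyv, hvz⟩ := hG.exists_dist_eq_dist_sub (x := y) (y := z) (r := 1) (by omega)
  rw [hyz] at hvz
  -- `d v x ∈ {δ - 1, δ}` as `v` is adjacent to `y`, and `ρ (d v x) ≥ ρ (d v z) - ρ δ = 2`
  have hvx : G.dist v x = δ - 1 := by
    have hρ := hH.rhoFun_dist_le v x z
    rw [hvz, hxz, rhoFun_sub_one hδ, rhoFun_self (by omega)] at hρ
    have hne : G.dist v x ≠ δ := fun h => by rw [h, rhoFun_self (by omega)] at hρ; omega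
    have := hG.dist_triangle (u := x) (v := v) (w := y)
    rw [dist_comm (u := x) (v := v), dist_comm (u := v) (v := y), hyv, hxy] at this
    have := hdiam.1 v x
    omega
  obtain ⟨u, huv, huy⟩ := hH.exists_dist_eq_diam_of_dist_eq_one hdiam (by omega)
    (dist_comm.trans hyv)
  have hux := hH.dist_eq_one_of_dist_eq_diam_sub_one hδ huy (dist_comm.trans hxy) huv hvx
  have huz := hH.dist_eq_one_of_dist_eq_diam_sub_one hδ huy hyz huv hvz
  have := hG.dist_triangle (u := x) (v := u) (w := z)
  rw [dist_comm (u := x) (v := u), hux, huz] at this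
  omega

theorem dist_eq_one_of_dist_eq_diam (hH : IsRhoTwist G H δ) (hG : G.Connected)
    (hdiam : HasDiameter G δ) (hδ : 3 ≤ δ) {u a b : V} (ha : G.dist u a = δ)
    (hb : G.dist u b = δ) (hab : a ≠ b) : G.dist a b = 1 := by
  have hρ := hH.rhoFun_dist_le a u b
  rw [dist_comm (u := a) (v := u), ha, hb, rhoFun_self (by omega)] at hρ
  have hpos := hG.pos_dist_of_ne hab
  rcases le_one_or_eq_of_rhoFun_le_two (hdiam.1 a b) hρ with h | h
  · omega
  · exact absurd ⟨u, a, b, ha, h, hb⟩ (hH.not_realizesTriangle_diam hG hdiam hδ)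

theorem perimeter_lt (hH : IsRhoTwist G H δ) (hG : IsMetricallyHomogeneous G)
    (hdiam : HasDiameter G δ) (hδ : 3 ≤ δ) (x y z : V) :
    G.dist x y + G.dist y z + G.dist x z < 2 * δ + 2 := by
  by_contra! hbig
  obtain ⟨y', hy'z, hy'⟩ := hG.exists_dist_eq_diam_and_add_le hdiam x y z
  obtain ⟨x', hx'y', hx'⟩ := hG.exists_dist_eq_diam_and_add_le hdiam z x y'
  have hρ := hH.rhoFun_dist_le x' y' z
  rw [hx'y', hy'z, rhoFun_self (by omega)] at hρ
  rw [dist_comm (u := z), dist_comm (u := z)] at hx'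
  rcases le_one_or_eq_of_rhoFun_le_two (hdiam.1 x' z) hρ with h | h
  · omega
  · exact hH.not_realizesTriangle_diam hG.1 hdiam hδ ⟨x', y', z, hx'y', hy'z, h⟩

theorem neighborSet_subset_biUnion_sphere (hH : IsRhoTwist G H δ) (hdiam : HasDiameter G δ)
    (hδ : 2 ≤ δ) (x : V) :
    G.neighborSet x ⊆ ⋃ w ∈ {w | G.dist x w = δ}, {v | G.dist w v = δ} := by
  intro v hv
  obtain ⟨w, hwx, hwv⟩ :=
    hH.exists_dist_eq_diam_of_dist_eq_one hdiam hδ (dist_eq_one_iff_adj.mpr hv)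
  exact Set.mem_biUnion (dist_comm.trans hwx) hwv

theorem exists_sphere_infinite (hH : IsRhoTwist G H δ) (hG : G.Connected)
    (hgen : GenericType G) (hdiam : HasDiameter G δ) (hδ : 2 ≤ δ) :
    ∃ w, {v | G.dist w v = δ}.Infinite := by
  by_contra! hfin
  obtain ⟨x, y, hxy⟩ := hdiam.exists_dist_eq_s12 hG hδ
  have hnbr : (G.neighborSet x).Finite :=
    ((hfin x).biUnion fun w _ => hfin w).subset (hH.neighborSet_subset_biUnion_sphere hdiam hδ x)
  exact (hgen.1 x y hxy).1 (hnbr.subset fun z hz => hz.1)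

theorem realizesTriangle_one (hH : IsRhoTwist G H δ) (hG : G.Connected)
    (hgen : GenericType G) (hdiam : HasDiameter G δ) (hδ : 3 ≤ δ) :
    RealizesTriangle G 1 1 1 := by
  classical
  obtain ⟨u, hu⟩ := hH.exists_sphere_infinite hG hgen hdiam (by omega)
  obtain ⟨t, hts, ht⟩ := hu.exists_subset_card_eq 3
  obtain ⟨a, b, c, hab, hac, hbc, rfl⟩ := Finset.card_eq_three.mp ht
  have hsph : ∀ v ∈ ({a, b, c} : Finset V), G.dist u v = δ := fun v hv => hts hv
  have adj := fun {v w} hv hw => hH.dist_eq_one_of_dist_eq_diam hG hdiam hδ (hsph v hv) (hsph w hw)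
  exact ⟨a, b, c, adj (by simp) (by simp) hab, adj (by simp) (by simp) hbc,
    adj (by simp) (by simp) hac⟩

end IsRhoTwist

section Parameters

variable {V : Type*} {G : SimpleGraph V} {δ : ℕ}

theorem realizesPerimeter_of_realizesTriangle {a b c : ℕ} (h : RealizesTriangle G a b c)
    (ha : 0 < a) (hb : 0 < b) (hc : 0 < c) : RealizesPerimeter G (a + b + c) := by
  obtain ⟨x, y, z, hxy, hyz, hxz⟩ := h
  refine ⟨x, y, z, ?_, ?_, ?_, by rw [hxy, hyz, hxz]⟩ <;> rintro rfl <;> simp_all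

theorem isK1_one (hG : G.Connected) (h : RealizesTriangle G 1 1 1) : IsK1 G 1 := by
  refine ⟨h, fun m ⟨x, y, z, hxy, hyz, hxz⟩ => Nat.one_le_iff_ne_zero.mpr fun hm => ?_⟩
  rw [hm, hG.dist_eq_zero_iff] at hxy hyz
  subst hxy hyz
  simp at hxz

theorem isK2_of_realizesTriangle (hdiam : HasDiameter G δ) (h : RealizesTriangle G δ δ 1) :
    IsK2 G δ :=
  ⟨h, fun _ ⟨x, y, _, hxy, _⟩ => hxy ▸ hdiam.1 x y⟩

theorem isC0_of_perimeter_lt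
    (hbound : ∀ x y z : V, G.dist x y + G.dist y z + G.dist x z < 2 * δ + 2) :
    IsC0 G δ (2 * δ + 2) :=
  ⟨⟨⟨δ + 1, by ring⟩, by omega, fun ⟨x, y, z, _, _, _, h⟩ => (hbound x y z).ne h⟩,
    fun _ ⟨⟨k, hk⟩, hlt, _⟩ => by omega⟩

theorem isC1_of_perimeter_lt
    (hbound : ∀ x y z : V, G.dist x y + G.dist y z + G.dist x z < 2 * δ + 2)
    (h : RealizesPerimeter G (2 * δ + 1)) : IsC1 G δ (2 * δ + 3) := by
  refine ⟨⟨⟨δ + 1, by ring⟩, by omega, fun ⟨x, y, z, _, _, _, hp⟩ => ?_⟩, ?_⟩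
  · exact absurd (hbound x y z) (by omega)
  · rintro c ⟨⟨k, rfl⟩, hlt, hc⟩
    by_contra! hc'
    exact hc (by convert h using 1; omega)

end Parameters

/-- if `Γ^ρ` is metrically homogeneous then the numerical
parameters of `Γ` are `K₁ = 1`, `K₂ = δ`, `C = 2δ+2`, `C' = 2δ+3`. -/
theorem necessity_rho {V : Type*} (G H : SimpleGraph V) (δ : ℕ) (hδ : 3 ≤ δ)
    (hG : IsMetricallyHomogeneous G) (hgen : GenericType G)
    (hdiam : HasDiameter G δ)
    (hH : IsMetricallyHomogeneous H)
    (htw : ∀ x y : V, x ≠ y → H.dist x y = rhoFun δ (G.dist x y)) :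
    IsK1 G 1 ∧ IsK2 G δ ∧
    ∃ c0 c1 : ℕ, IsC0 G δ c0 ∧ IsC1 G δ c1 ∧
      min c0 c1 = 2 * δ + 2 ∧ max c0 c1 = 2 * δ + 3 := by
  have hρ : IsRhoTwist G H δ := ⟨hH.1, fun x y => by
    rcases eq_or_ne x y with rfl | hxy
    · simp [rhoFun_zero]
    · exact htw x y hxy⟩
  have hbound := hρ.perimeter_lt hG hdiam hδ
  obtain ⟨a, b, hab⟩ := hdiam.exists_dist_eq_s12 hG.1 (r := 1) (by omega)
  obtain ⟨u, hua, hub⟩ := hρ.exists_dist_eq_diam_of_dist_eq_one hdiam (by omega) hab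
  have hδδ1 : RealizesTriangle G δ δ 1 := ⟨a, u, b, dist_comm.trans hua, hub, hab⟩
  have hperim : RealizesPerimeter G (2 * δ + 1) :=
    two_mul δ ▸ realizesPerimeter_of_realizesTriangle hδδ1 (by omega) (by omega) one_pos
  refine ⟨isK1_one hG.1 (hρ.realizesTriangle_one hG.1 hgen hdiam hδ),
    isK2_of_realizesTriangle hdiam hδδ1, 2 * δ + 2, 2 * δ + 3, isC0_of_perimeter_lt hbound,
    isC1_of_perimeter_lt hbound hperim, by omega, by omega⟩
end
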